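/- arXiv:1808.09245 — 5 statements merged into one kernel-verified Lean document; each statement's English description precedes it below -/
import Mathlib

section
/- For all integers n ≥ 2 and k ≥ 1, there exists a k-coloring of the edges of the complete graph K_{n·2^k} that contains no rainbow triangle and no monochromatic copy of the cycle C_{2n+1}. Consequently gr_k(K_3 : C_{2n+1}) ≥ n·2^k + 1. -/
open SimpleGraph

/-- The edge coloring `c` of the complete graph on `V` contains a rainbow triangle. -/
def HasRainbowTriangle {V α : Type*} (c : Sym2 V → α) : Prop :=
  ∃ x y z : V, x ≠ y ∧ x ≠ z ∧ y ≠ z ∧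
    c s(x, y) ≠ c s(x, z) ∧ c s(x, y) ≠ c s(y, z) ∧ c s(x, z) ≠ c s(y, z)

/-- The edge coloring `c` contains a copy of `H` all of whose edges have color `i`. -/
def HasMonoCopyIn {V W α : Type*} (c : Sym2 V → α) (H : SimpleGraph W) (i : α) : Prop :=
  ∃ f : W ↪ V, ∀ u v, H.Adj u v → c s(f u, f v) = i

/-- The edge coloring `c` contains a monochromatic copy of `H`. -/
def HasMonoCopy {V W α : Type*} (c : Sym2 V → α) (H : SimpleGraph W) : Prop :=
  ∃ i, HasMonoCopyIn c H i

/-- Every `k`-coloring of the edges of `K_n` contains a rainbow triangle or a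
monochromatic copy of `H`. -/
def grProp {W : Type*} (k : ℕ) (H : SimpleGraph W) (n : ℕ) : Prop :=
  ∀ c : Sym2 (Fin n) → Fin k, HasRainbowTriangle c ∨ HasMonoCopy c H

/-- The `k`-color Gallai–Ramsey number `gr_k(K₃ : H)`: the minimum `N` such that for all
`n ≥ N`, every `k`-coloring of the edges of `K_n` contains a rainbow triangle or a
monochromatic copy of `H`. -/
noncomputable def gr {W : Type*} (k : ℕ) (H : SimpleGraph W) : ℕ :=
  sInf {N | ∀ n, N ≤ n → grProp k H n}

/-! ### Auxiliary: a Ramsey-type result giving the upper bound set nonempty -/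

lemma ramsey_seq {V : Type*} [DecidableEq V] {k : ℕ} (hk : 0 < k) (c : Sym2 V → Fin k) :
    ∀ (L : ℕ) (S : Finset V), (k+1)^L ≤ S.card →
      ∃ (a : ℕ → V) (d : ℕ → Fin k), (∀ i, a i ∈ S) ∧
        (∀ i j, i < j → j < L → a i ≠ a j ∧ c s(a i, a j) = d i) := by
  intro L
  induction L with
  | zero =>
    intro S hS
    obtain ⟨v, hv⟩ : S.Nonempty := Finset.card_pos.mp (by simpa using hS)
    exact ⟨fun _ => v, fun _ => ⟨0, hk⟩, fun _ => hv, fun i j h1 h2 => by omega⟩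
  | succ L ih =>
    intro S hS
    obtain ⟨v, hv⟩ : S.Nonempty := Finset.card_pos.mp (lt_of_lt_of_le (by positivity) hS)
    have hmaps : ∀ x ∈ S.erase v, (fun x => c s(v, x)) x ∈ (Finset.univ : Finset (Fin k)) :=
      fun _ _ => Finset.mem_univ _
    have hcard : (Finset.univ : Finset (Fin k)).card * (k+1)^L ≤ (S.erase v).card := by
      rw [Finset.card_univ, Fintype.card_fin, Finset.card_erase_of_mem hv]
      have h1 : (k+1)^(L+1) = k * (k+1)^L + (k+1)^L := by ring
      have h2 : 1 ≤ (k+1)^L := Nat.one_le_pow _ _ (by omega)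
      omega
    obtain ⟨i, -, hT⟩ := Finset.exists_le_card_fiber_of_mul_le_card_of_maps_to hmaps
      ⟨⟨0, hk⟩, Finset.mem_univ _⟩ hcard
    obtain ⟨a, d, haS, hpair⟩ := ih _ hT
    refine ⟨fun m => if m = 0 then v else a (m-1), fun m => if m = 0 then i else d (m-1),
      ?_, ?_⟩
    · intro m
      by_cases hm : m = 0
      · simpa [hm] using hv
      · simp only [hm, if_neg]
        have := haS (m-1)
        simp only [Finset.mem_filter] at this
        exact Finset.mem_of_mem_erase this.1
    · intro p q hpq hq
      by_cases hp : p = 0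
      · subst hp
        have hq0 : ¬ q = 0 := by omega
        simp only [if_pos rfl, if_neg hq0]
        have hmem := haS (q-1)
        simp only [Finset.mem_filter] at hmem
        exact ⟨fun h => (Finset.ne_of_mem_erase hmem.1) h.symm, hmem.2⟩
      · have hq0 : ¬ q = 0 := by omega
        simp only [if_neg hp, if_neg hq0]
        exact hpair (p-1) (q-1) (by omega) (by omega)

lemma ramsey_clique {k t m : ℕ} (hk : 0 < k) (hm : (k+1)^(k*t) ≤ m)
    (c : Sym2 (Fin m) → Fin k) :
    ∃ (i : Fin k) (f : Fin t ↪ Fin m), ∀ u v, u ≠ v → c s(f u, f v) = i := by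
  obtain ⟨a, d, -, hpair⟩ := ramsey_seq hk c (k*t) Finset.univ
    (by simpa using hm)
  obtain ⟨i, -, hT⟩ := Finset.exists_le_card_fiber_of_mul_le_card_of_maps_to
    (f := d) (s := Finset.range (k*t)) (t := (Finset.univ : Finset (Fin k))) (n := t)
    (fun _ _ => Finset.mem_univ _) ⟨⟨0, hk⟩, Finset.mem_univ _⟩
    (by simp [Finset.card_univ])
  obtain ⟨T, hTsub, hTcard⟩ := Finset.exists_subset_card_eq hT
  have hmemT : ∀ x ∈ T, x ∈ Finset.range (k*t) ∧ d x = i := by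
    intro x hx
    have := hTsub hx
    simpa using this
  set e := T.orderIsoOfFin hTcard with he
  have hkey : ∀ u v : Fin t, u ≠ v → a ((e u : ℕ)) ≠ a ((e v : ℕ)) ∧
      c s(a ((e u : ℕ)), a ((e v : ℕ))) = i := by
    intro u v huv
    have hne : ((e u : ℕ)) ≠ ((e v : ℕ)) := by
      intro h
      exact huv (e.injective (Subtype.coe_injective h))
    rcases Nat.lt_or_ge (e u : ℕ) (e v : ℕ) with h | h
    · have hv : ((e v : ℕ)) < k*t := by
        have := (hmemT _ (e v).2).1; simpa using this
      obtain ⟨h1, h2⟩ := hpair _ _ h hv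
      exact ⟨h1, h2.trans (hmemT _ (e u).2).2⟩
    · have hlt : ((e v : ℕ)) < ((e u : ℕ)) := by omega
      have hu : ((e u : ℕ)) < k*t := by
        have := (hmemT _ (e u).2).1; simpa using this
      obtain ⟨h1, h2⟩ := hpair _ _ hlt hu
      refine ⟨fun h => h1 h.symm, ?_⟩
      rw [Sym2.eq_swap]
      exact h2.trans (hmemT _ (e v).2).2
  refine ⟨i, ⟨fun u => a ((e u : ℕ)), ?_⟩, ?_⟩
  · intro u v huv
    by_contra hne
    exact (hkey u v hne).1 huv
  · intro u v huv
    exact (hkey u v huv).2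

/-! ### Auxiliary: the hierarchical coloring -/

def Dcol (n k x y : ℕ) : ℕ :=
  (Finset.range k).sup (fun i => if x / (2*n*2^i) = y / (2*n*2^i) then 0 else i+1)

lemma le_Dcol {n k x y i : ℕ} (hi : i ∈ Finset.range k) :
    (if x / (2*n*2^i) = y / (2*n*2^i) then 0 else i+1) ≤ Dcol n k x y := by
  unfold Dcol
  exact Finset.le_sup (f := fun i => if x / (2*n*2^i) = y / (2*n*2^i) then 0 else i+1) hi

lemma Dcol_symm (n k x y : ℕ) : Dcol n k x y = Dcol n k y x := by
  unfold Dcol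
  congr 1
  funext i
  simp [eq_comm]

lemma Dcol_lt {n k x y : ℕ} (hk : 1 ≤ k) (hx : x < n * 2^k) (hy : y < n * 2^k) :
    Dcol n k x y < k := by
  unfold Dcol
  apply (Finset.sup_lt_iff (by simp only [bot_eq_zero]; omega : (⊥ : ℕ) < k)).2
  intro i hi
  rw [Finset.mem_range] at hi
  by_cases h : i = k - 1
  · have hpow : 2*n*2^i = n * 2^k := by
      subst h
      have h2 : (2:ℕ)*2^(k-1) = 2^k := by
        rw [← pow_succ']
        congr 1
        omega
      rw [mul_comm 2 n, mul_assoc, h2]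
    rw [hpow, Nat.div_eq_of_lt hx, Nat.div_eq_of_lt hy, if_pos rfl]
    omega
  · split
    · omega
    · omega

lemma Dcol_ultra (n k x y z : ℕ) :
    Dcol n k x z ≤ max (Dcol n k x y) (Dcol n k y z) := by
  unfold Dcol
  apply Finset.sup_le
  intro i hi
  by_cases h : x / (2*n*2^i) = z / (2*n*2^i)
  · simp [h]
  · rw [if_neg h]
    by_cases h1 : x / (2*n*2^i) = y / (2*n*2^i)
    · have h2 : ¬ y / (2*n*2^i) = z / (2*n*2^i) := fun h2 => h (h1.trans h2)
      have hle := le_Dcol (n := n) (x := y) (y := z) hi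
      rw [if_neg h2] at hle
      unfold Dcol at hle
      omega
    · have hle := le_Dcol (n := n) (x := x) (y := y) hi
      rw [if_neg h1] at hle
      unfold Dcol at hle
      omega

lemma Dcol_zero {n k x y : ℕ} (hk : 1 ≤ k) (h : Dcol n k x y = 0) :
    x / (2*n) = y / (2*n) := by
  have h0 : (0:ℕ) ∈ Finset.range k := Finset.mem_range.2 (by omega)
  have hle := le_Dcol (n := n) (x := x) (y := y) h0
  rw [h] at hle
  simp only [pow_zero, mul_one] at hle
  by_contra hne
  rw [if_neg hne] at hle
  omega

lemma Dcol_pos {n k x y m : ℕ} (hm : 0 < m) (hmk : m < k) (h : Dcol n k x y = m) :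
    (x / (2*n*2^(m-1))) % 2 ≠ (y / (2*n*2^(m-1))) % 2 := by
  obtain ⟨j, hj, hej⟩ := Finset.exists_mem_eq_sup (Finset.range k)
    ⟨0, Finset.mem_range.2 (by omega)⟩
    (fun i => if x / (2*n*2^i) = y / (2*n*2^i) then 0 else i+1)
  unfold Dcol at h
  rw [h] at hej
  have hdiff : ¬ x / (2*n*2^(m-1)) = y / (2*n*2^(m-1)) := by
    by_cases hc : x / (2*n*2^j) = y / (2*n*2^j)
    · rw [if_pos hc] at hej; omega
    · rw [if_neg hc] at hej
      have hjm : j = m - 1 := by omega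
      rwa [hjm] at hc
  have heq : x / (2*n*2^m) = y / (2*n*2^m) := by
    by_contra hc
    have hmem : m ∈ Finset.range k := Finset.mem_range.2 hmk
    have hle := le_Dcol (n := n) (x := x) (y := y) hmem
    unfold Dcol at hle
    rw [h, if_neg hc] at hle
    omega
  have hAB : (x / (2*n*2^(m-1))) / 2 = (y / (2*n*2^(m-1))) / 2 := by
    have hexp : (2:ℕ)^m = 2^(m-1) * 2 := by
      rw [← pow_succ]
      congr 1
      omega
    have hpow : 2*n*2^m = (2*n*2^(m-1)) * 2 := by
      rw [hexp]; ring
    rw [hpow, ← Nat.div_div_eq_div_mul x (2*n*2^(m-1)),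
      ← Nat.div_div_eq_div_mul y (2*n*2^(m-1))] at heq
    exact heq
  set A := x / (2*n*2^(m-1)) with hA
  set B := y / (2*n*2^(m-1)) with hB
  omega

/-! ### Cycle adjacency helpers -/

lemma cycle_adj_succ {n : ℕ} (hn : 2 ≤ n) {j : ℕ} (hj : j < 2*n) :
    (cycleGraph (2*n+1)).Adj ⟨j, by omega⟩ ⟨j+1, by omega⟩ := by
  rw [cycleGraph_adj']
  right
  rw [Fin.sub_def]
  simp only []
  have h1 : 2*n+1 - j + (j+1) = (2*n+1) + 1 := by omega
  rw [h1, Nat.add_mod_left, Nat.mod_eq_of_lt (by omega)]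

lemma cycle_adj_last {n : ℕ} (hn : 2 ≤ n) :
    (cycleGraph (2*n+1)).Adj ⟨2*n, by omega⟩ ⟨0, by omega⟩ := by
  rw [cycleGraph_adj']
  right
  rw [Fin.sub_def]
  simp only []
  have h1 : 2*n+1 - (2*n) + 0 = 1 := by omega
  rw [h1, Nat.mod_eq_of_lt (by omega)]

/-! ### The construction -/

lemma construction (n k : ℕ) (hn : 2 ≤ n) (hk : 1 ≤ k) :
    ∃ c : Sym2 (Fin (n * 2 ^ k)) → Fin k,
      ¬ HasRainbowTriangle c ∧ ¬ HasMonoCopy c (cycleGraph (2 * n + 1)) := by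
  refine ⟨Sym2.lift ⟨fun x y => ⟨Dcol n k x.val y.val, Dcol_lt hk x.isLt y.isLt⟩,
    fun x y => by simp only [Fin.mk.injEq]; exact Dcol_symm n k x.val y.val⟩, ?_, ?_⟩
  · rintro ⟨x, y, z, hxy, hxz, hyz, h1, h2, h3⟩
    simp only [Sym2.lift_mk, ne_eq, Fin.mk.injEq] at h1 h2 h3
    have u1 := le_max_iff.1 (Dcol_ultra n k x.val y.val z.val)
    have u2 := le_max_iff.1 (Dcol_ultra n k x.val z.val y.val)
    have u3 := le_max_iff.1 (Dcol_ultra n k y.val x.val z.val)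
    have e1 : Dcol n k z.val y.val = Dcol n k y.val z.val := Dcol_symm n k z.val y.val
    have e2 : Dcol n k y.val x.val = Dcol n k x.val y.val := Dcol_symm n k y.val x.val
    rcases u1 with h | h <;> rcases u2 with h' | h' <;>
      rcases u3 with h'' | h'' <;> omega
  · rintro ⟨i, f, hf⟩
    have hcol : ∀ u v, (cycleGraph (2*n+1)).Adj u v →
        Dcol n k (f u).val (f v).val = i.val := by
      intro u v huv
      have := hf u v huv
      simp only [Sym2.lift_mk] at this
      exact congrArg Fin.val this
    by_cases hi : i.val = 0
    · -- all vertices in one block of size 2n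
      have hconst : ∀ j, ∀ h : j < 2*n+1,
          (f ⟨j, h⟩).val / (2*n) = (f ⟨0, by omega⟩).val / (2*n) := by
        intro j
        induction j with
        | zero => intro h; rfl
        | succ j ihj =>
          intro h
          have hadj := cycle_adj_succ hn (by omega : j < 2*n)
          have hd := hcol _ _ hadj
          rw [hi] at hd
          exact (Dcol_zero hk hd).symm.trans (ihj (by omega))
      have hginj : Function.Injective
          (fun u : Fin (2*n+1) => (⟨(f u).val % (2*n), Nat.mod_lt _ (by omega)⟩ : Fin (2*n))) := by
        intro u v huv
        simp only [Fin.mk.injEq] at huv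
        have hu := hconst u.val u.isLt
        have hv := hconst v.val v.isLt
        simp only [Fin.eta] at hu hv
        have hval : (f u).val = (f v).val := by
          conv_lhs => rw [← Nat.div_add_mod (f u).val (2*n)]
          conv_rhs => rw [← Nat.div_add_mod (f v).val (2*n)]
          rw [hu, hv, huv]
        exact f.injective (Fin.val_injective hval)
      have := Fintype.card_le_of_injective _ hginj
      simp only [Fintype.card_fin] at this
      omega
    · -- parity argument
      have hm : 0 < i.val := by omega
      have hmk : i.val < k := i.isLt
      have hpar : ∀ u v, (cycleGraph (2*n+1)).Adj u v →
          ((f u).val / (2*n*2^(i.val-1))) % 2 ≠ ((f v).val / (2*n*2^(i.val-1))) % 2 :=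
        fun u v huv => Dcol_pos hm hmk (hcol u v huv)
      set p : Fin (2*n+1) → ℕ := fun u => ((f u).val / (2*n*2^(i.val-1))) % 2 with hp
      have hstep : ∀ j, ∀ h : j < 2*n+1,
          p ⟨j, h⟩ = (p ⟨0, by omega⟩ + j) % 2 := by
        intro j
        induction j with
        | zero =>
          intro h
          simp only [hp]
          omega
        | succ j ihj =>
          intro h
          have hadj := cycle_adj_succ hn (by omega : j < 2*n)
          have hne := hpar _ _ hadj
          have hih := ihj (by omega)
          simp only [hp] at hne hih ⊢
          omega
      have hlast := hpar _ _ (cycle_adj_last hn)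
      have h2n := hstep (2*n) (by omega)
      have hb0 : p ⟨0, by omega⟩ < 2 := Nat.mod_lt _ (by omega)
      simp only [hp] at h2n hlast hb0
      omega

theorem gallai_ramsey_odd_cycles_lower (n k : ℕ) (hn : 2 ≤ n) (hk : 1 ≤ k) :
    (∃ c : Sym2 (Fin (n * 2 ^ k)) → Fin k,
      ¬ HasRainbowTriangle c ∧ ¬ HasMonoCopy c (cycleGraph (2 * n + 1))) ∧
    n * 2 ^ k + 1 ≤ gr k (cycleGraph (2 * n + 1)) := by
  obtain ⟨c, hc1, hc2⟩ := construction n k hn hk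
  refine ⟨⟨c, hc1, hc2⟩, ?_⟩
  unfold gr
  have hN0 : ((k+1)^(k*(2*n+1)) : ℕ) ∈ {N | ∀ m, N ≤ m → grProp k (cycleGraph (2*n+1)) m} := by
    intro m hm cc
    right
    obtain ⟨i, f, hmono⟩ := ramsey_clique (by omega : 0 < k) hm cc
    exact ⟨i, f, fun u v huv => hmono u v huv.ne⟩
  apply le_csInf ⟨_, hN0⟩
  intro N hN
  by_contra hcon
  have hle : N ≤ n * 2^k := by omega
  have := hN (n * 2^k) hle c
  rcases this with h | h
  · exact hc1 h
  · exact hc2 h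
end

section
/- For every integer k ≥ 2, the k-color Gallai-Ramsey number of the triangle satisfies gr_k(K_3 : K_3) = 5^{k/2} + 1 if k is even, and gr_k(K_3 : K_3) = 2·5^{(k−1)/2} + 1 if k is odd. -/
open SimpleGraph

/-!
`gr k K₃ = gallaiBound k + 1`, where `gallaiBound k` is the largest order of a `k`-colouring of a
complete graph with neither rainbow nor monochromatic triangles.

Upper bound. By Gallai's theorem, a colouring of `s` without rainbow triangles has two colours
`r`, `b` such that the edges coloured neither `r` nor `b` do not connect `s`; their components
are the parts of a partition of `s` in which any two parts are joined in a single colour, `r` or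
`b`. One vertex from each part spans a 2-coloured complete graph without monochromatic triangle,
so there are at most five parts. A part misses every colour it sends to the other parts, so by
induction on the number `k` of colours it has at most `gallaiBound (k - 1)` vertices, and at most
`gallaiBound (k - 2)` if it sees both `r` and `b`. With three parts at most one part, and with four
or five parts no part, sees a single colour; as `2 * gallaiBound (k - 1) ≤ 5 * gallaiBound (k - 2)
= gallaiBound k`, the parts add up to at most `gallaiBound k` vertices.

Lower bound. Substituting copies of an extremal `k`-colouring for the vertices of the pentagon
coloured by two 5-cycles, and colouring the edges between copies like the pentagon in two new
colours, gives an extremal `(k + 2)`-colouring on `5 * gallaiBound k` vertices; for `k = 1` take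
an edge.
-/

open Finset

def gallaiBound : ℕ → ℕ
  | 0 => 1
  | 1 => 2
  | n + 2 => 5 * gallaiBound n

lemma gallaiBound_growth (n : ℕ) :
    2 * gallaiBound n ≤ gallaiBound (n + 1) ∧ 2 * gallaiBound (n + 1) ≤ 5 * gallaiBound n := by
  induction n with
  | zero => decide
  | succ n ih => simp only [gallaiBound]; omega

lemma gallaiBound_mono : Monotone gallaiBound :=
  monotone_nat_of_le_succ fun n => by have := gallaiBound_growth n; omega

lemma one_le_gallaiBound (n : ℕ) : 1 ≤ gallaiBound n :=
  gallaiBound_mono (Nat.zero_le n)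

lemma gallaiBound_two_mul (t : ℕ) : gallaiBound (2 * t) = 5 ^ t := by
  induction t with
  | zero => rfl
  | succ t ih => rw [Nat.mul_succ, gallaiBound, ih, pow_succ, mul_comm]

lemma gallaiBound_two_mul_add_one (t : ℕ) : gallaiBound (2 * t + 1) = 2 * 5 ^ t := by
  induction t with
  | zero => rfl
  | succ t ih => rw [Nat.mul_succ, gallaiBound, ih, pow_succ]; ring

-- `m` parts, `a` of which see a single colour
lemma sum_parts_le_gallaiBound {k m a : ℕ} (hk : 1 ≤ k) (ha : a ≤ m) (hm : m ≤ 5)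
    (h₃ : 3 ≤ m → a ≤ 1) (h₄ : 4 ≤ m → a = 0) (h₁ : k = 1 → a = m) :
    a * gallaiBound (k - 1) + (m - a) * gallaiBound (k - 2) ≤ gallaiBound k := by
  obtain ⟨_ | j, rfl⟩ : ∃ j, k = j + 1 := ⟨k - 1, by omega⟩
  · obtain rfl := h₁ rfl
    interval_cases a <;> simp_all [gallaiBound]
  · have h := gallaiBound_growth j
    simp only [Nat.add_sub_cancel, show j + 1 + 1 - 2 = j by omega, gallaiBound]
    interval_cases m <;> interval_cases a <;> omega

section Colorings

variable {V α : Type*}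

def IsGallaiOn (c : Sym2 V → α) (s : Finset V) : Prop :=
  ∀ x ∈ s, ∀ y ∈ s, ∀ z ∈ s, x ≠ y → x ≠ z → y ≠ z →
    c s(x, y) = c s(x, z) ∨ c s(x, y) = c s(y, z) ∨ c s(x, z) = c s(y, z)

def IsMonoTriangleFreeOn (c : Sym2 V → α) (s : Finset V) : Prop :=
  ∀ x ∈ s, ∀ y ∈ s, ∀ z ∈ s, x ≠ y → x ≠ z → y ≠ z →
    ¬(c s(x, y) = c s(x, z) ∧ c s(x, y) = c s(y, z))

variable {c : Sym2 V → α} {s t : Finset V} {x y z : V}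

lemma IsGallaiOn.mono (h : IsGallaiOn c s) (hts : t ⊆ s) : IsGallaiOn c t :=
  fun x hx y hy z hz => h x (hts hx) y (hts hy) z (hts hz)

lemma IsMonoTriangleFreeOn.mono (h : IsMonoTriangleFreeOn c s) (hts : t ⊆ s) :
    IsMonoTriangleFreeOn c t :=
  fun x hx y hy z hz => h x (hts hx) y (hts hy) z (hts hz)

lemma IsGallaiOn.eq_of_ne_of_ne (h : IsGallaiOn c s) (hx : x ∈ s) (hy : y ∈ s) (hz : z ∈ s)
    (hxy : x ≠ y) (hxz : x ≠ z) (hyz : y ≠ z)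
    (h₁ : c s(x, y) ≠ c s(x, z)) (h₂ : c s(x, y) ≠ c s(y, z)) : c s(x, z) = c s(y, z) :=
  (h x hx y hy z hz hxy hxz hyz).resolve_left h₁ |>.resolve_left h₂

lemma IsMonoTriangleFreeOn.ne (h : IsMonoTriangleFreeOn c s) (hx : x ∈ s) (hy : y ∈ s)
    (hz : z ∈ s) (hxy : x ≠ y) (hxz : x ≠ z) (hyz : y ≠ z) {d : α}
    (hyd : c s(x, y) = d) (hzd : c s(x, z) = d) : c s(y, z) ≠ d :=
  fun hd => h x hx y hy z hz hxy hxz hyz ⟨hyd.trans hzd.symm, hyd.trans hd.symm⟩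

lemma hasRainbowTriangle_iff_not_isGallaiOn [Fintype V] :
    HasRainbowTriangle c ↔ ¬IsGallaiOn c univ := by
  simp only [HasRainbowTriangle, IsGallaiOn, mem_univ, true_implies, not_forall, not_or,
    exists_prop]

lemma hasMonoCopy_top_iff_not_isMonoTriangleFreeOn [Fintype V] :
    HasMonoCopy c (⊤ : SimpleGraph (Fin 3)) ↔ ¬IsMonoTriangleFreeOn c univ := by
  simp only [IsMonoTriangleFreeOn, mem_univ, true_implies, not_forall, not_not]
  constructor
  · rintro ⟨i, f, hf⟩
    refine ⟨f 0, f 1, f 2, by simp, by simp, by simp, ?_, ?_⟩ <;>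
      simp only [hf 0 1 (by decide), hf 0 2 (by decide), hf 1 2 (by decide)]
  · rintro ⟨x, y, z, hxy, hxz, hyz, h₁, h₂⟩
    refine ⟨c s(x, y), ⟨![x, y, z], ?_⟩, ?_⟩
    · intro a b hab
      fin_cases a <;> fin_cases b <;> simp_all
    · intro a b hab
      change c s(![x, y, z] a, ![x, y, z] b) = c s(x, y)
      fin_cases a <;> fin_cases b <;>
        simp [Sym2.eq_swap (a := y) (b := x), Sym2.eq_swap (a := z) (b := x),
          Sym2.eq_swap (a := z) (b := y), ← h₁, ← h₂] at hab ⊢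

end Colorings

section TwoColorings

variable {V α : Type*} [DecidableEq V] {c : Sym2 V → α} {R T : Finset V} {r b d : α} {x : V}

lemma card_le_two_of_forall_color_eq
    (h₂ : ∀ y ∈ R, ∀ z ∈ R, y ≠ z → c s(y, z) ∈ ({r, b} : Set α))
    (hM : IsMonoTriangleFreeOn c R) (hx : x ∈ R) (hT : T ⊆ R.erase x)
    (hd : ∀ y ∈ T, c s(x, y) = d) : #T ≤ 2 := by
  by_contra! hT₃
  obtain ⟨y₁, hy₁, y₂, hy₂, y₃, hy₃, h₁₂, h₁₃, h₂₃⟩ := two_lt_card.1 hT₃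
  have hR : ∀ y ∈ T, y ∈ R ∧ x ≠ y := fun y hy =>
    ⟨mem_of_mem_erase (hT hy), (ne_of_mem_erase (hT hy)).symm⟩
  have hdrb : d = r ∨ d = b := hd y₁ hy₁ ▸ h₂ x hx _ (hR y₁ hy₁).1 (hR y₁ hy₁).2
  have hT₂ : ∀ y ∈ T, ∀ z ∈ T, y ≠ z → (c s(y, z) = r ∨ c s(y, z) = b) ∧ c s(y, z) ≠ d :=
    fun y hy z hz hyz => ⟨h₂ y (hR y hy).1 z (hR z hz).1 hyz,
      hM.ne hx (hR y hy).1 (hR z hz).1 (hR y hy).2 (hR z hz).2 hyz (hd y hy) (hd z hz)⟩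
  have e₁₂ := hT₂ y₁ hy₁ y₂ hy₂ h₁₂
  have e₁₃ := hT₂ y₁ hy₁ y₃ hy₃ h₁₃
  have e₂₃ := hT₂ y₂ hy₂ y₃ hy₃ h₂₃
  exact hM y₁ (hR y₁ hy₁).1 y₂ (hR y₂ hy₂).1 y₃ (hR y₃ hy₃).1 h₁₂ h₁₃ h₂₃ (by grind)

lemma card_le_five_of_two_colors
    (h₂ : ∀ y ∈ R, ∀ z ∈ R, y ≠ z → c s(y, z) ∈ ({r, b} : Set α))
    (hM : IsMonoTriangleFreeOn c R) : #R ≤ 5 := by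
  classical
  by_contra! hR
  obtain ⟨x, hx⟩ : R.Nonempty := card_pos.1 (by omega)
  obtain ⟨d, -, hd⟩ := exists_lt_card_fiber_of_mul_lt_card_of_maps_to
    (s := R.erase x) (t := {r, b}) (f := fun y => c s(x, y)) (n := 2)
    (fun y hy => by simpa using h₂ x hx y (mem_of_mem_erase hy) (ne_of_mem_erase hy).symm)
    (by rw [card_erase_of_mem hx]; have := card_le_two (a := r) (b := b); omega)
  exact hd.not_ge <| card_le_two_of_forall_color_eq h₂ hM hx (filter_subset _ _)
    fun y hy => (mem_filter.1 hy).2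

variable [DecidableEq α]

def nbrColors (c : Sym2 V → α) (R : Finset V) (x : V) : Finset α :=
  (R.erase x).image fun y => c s(x, y)

lemma color_eq_of_card_nbrColors_le_one (h : #(nbrColors c R x) ≤ 1) {y z : V}
    (hy : y ∈ R.erase x) (hz : z ∈ R.erase x) : c s(x, y) = c s(x, z) :=
  card_le_one.1 h _ (mem_image_of_mem _ hy) _ (mem_image_of_mem _ hz)

lemma card_filter_card_nbrColors_le_one (hM : IsMonoTriangleFreeOn c R) (hR : 3 ≤ #R) :
    #{x ∈ R | #(nbrColors c R x) ≤ 1} ≤ 1 := by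
  by_contra! h
  obtain ⟨x, hx, x', hx', hxx'⟩ := one_lt_card.1 h
  rw [mem_filter] at hx hx'
  obtain ⟨z, hz⟩ : ((R.erase x).erase x').Nonempty := by
    rw [← card_pos, card_erase_of_mem (mem_erase.2 ⟨hxx'.symm, hx'.1⟩), card_erase_of_mem hx.1]
    omega
  obtain ⟨hzx', hzx, hzR⟩ : z ≠ x' ∧ z ≠ x ∧ z ∈ R := by simpa using hz
  have h₁ := color_eq_of_card_nbrColors_le_one hx.2 (mem_erase.2 ⟨hxx'.symm, hx'.1⟩)
    (mem_erase.2 ⟨hzx, hzR⟩)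
  have h₂ := color_eq_of_card_nbrColors_le_one hx'.2 (mem_erase.2 ⟨hxx', hx.1⟩)
    (mem_erase.2 ⟨hzx', hzR⟩)
  exact hM x hx.1 x' hx'.1 z hzR hxx' hzx.symm hzx'.symm ⟨h₁, by rw [Sym2.eq_swap, h₂]⟩

lemma one_lt_card_nbrColors (h₂ : ∀ y ∈ R, ∀ z ∈ R, y ≠ z → c s(y, z) ∈ ({r, b} : Set α))
    (hM : IsMonoTriangleFreeOn c R) (hR : 4 ≤ #R) (hx : x ∈ R) : 1 < #(nbrColors c R x) := by
  by_contra! h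
  obtain ⟨y, hy⟩ : (R.erase x).Nonempty := by rw [← card_pos, card_erase_of_mem hx]; omega
  have := card_le_two_of_forall_color_eq h₂ hM hx subset_rfl
    fun z hz => color_eq_of_card_nbrColors_le_one h hz hy
  rw [card_erase_of_mem hx] at this
  omega

end TwoColorings

lemma SimpleGraph.Reachable.mem_of_forall_adj {V : Type*} {G : SimpleGraph V} {K : Set V}
    {u w : V} (h : G.Reachable u w) (hu : u ∈ K) (hK : ∀ x ∈ K, ∀ y, G.Adj x y → y ∈ K) :
    w ∈ K := by
  rw [reachable_iff_reflTransGen] at h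
  induction h with
  | refl => exact hu
  | tail _ hadj ih => exact hK _ ih _ hadj

section GallaiTheorem

variable {V α : Type*} (c : Sym2 V → α)

def avoidGraph (s : Finset V) (r b : α) : SimpleGraph V where
  Adj x y := x ≠ y ∧ x ∈ s ∧ y ∈ s ∧ c s(x, y) ∉ ({r, b} : Set α)
  symm := ⟨fun x y ⟨hxy, hx, hy, hc⟩ => ⟨hxy.symm, hy, hx, by rwa [Sym2.eq_swap]⟩⟩
  loopless := ⟨fun _ h => h.1 rfl⟩

variable {c} {s t : Finset V} {r b : α} {v x y z u : V}

lemma mem_of_avoidGraph_reachable (h : (avoidGraph c s r b).Reachable x y) (hx : x ∈ s) :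
    y ∈ s :=
  h.mem_of_forall_adj hx fun _ _ _ hadj => hadj.2.2.1

lemma color_mem_of_not_reachable (hx : x ∈ s) (hy : y ∈ s)
    (h : ¬(avoidGraph c s r b).Reachable x y) : c s(x, y) ∈ ({r, b} : Set α) := by
  by_contra hc
  exact h (SimpleGraph.Adj.reachable ⟨fun hxy => h (hxy ▸ .rfl), hx, hy, hc⟩)

lemma not_reachable_of_forall_color_mem (hv : ∀ y ∈ s, y ≠ v → c s(v, y) ∈ ({r, b} : Set α))
    (hyv : y ≠ v) : ¬(avoidGraph c s r b).Reachable v y := fun h =>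
  have ⟨hne, _, hw, hc⟩ := (h.nonempty_neighborSet_left hyv.symm).some_mem
  hc (hv _ hw hne.symm)

lemma color_eq_of_reachable (hG : IsGallaiOn c s) (hy : y ∈ s)
    (hxy : ¬(avoidGraph c s r b).Reachable x y) (hxz : (avoidGraph c s r b).Reachable x z) :
    c s(x, y) = c s(z, y) := by
  rw [SimpleGraph.reachable_iff_reflTransGen] at hxz
  induction hxz with
  | refl => rfl
  | @tail w w' hxw hadj ih =>
    rw [← SimpleGraph.reachable_iff_reflTransGen] at hxw
    have ⟨hww', hw, hw', hc⟩ := hadj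
    have hwy : ¬(avoidGraph c s r b).Reachable w y := fun h => hxy (hxw.trans h)
    have hw'y : ¬(avoidGraph c s r b).Reachable w' y := fun h =>
      hxy (hxw.trans (hadj.reachable.trans h))
    -- `ww'` is the only edge of the triangle `ww'y` coloured outside `{r, b}`
    refine ih.trans (hG.eq_of_ne_of_ne hw hw' hy hww' (fun h => hwy (h ▸ .rfl))
      (fun h => hw'y (h ▸ .rfl)) ?_ ?_) <;> rintro hc'
    · exact hc (hc' ▸ color_mem_of_not_reachable hw hy hwy)
    · exact hc (hc' ▸ color_mem_of_not_reachable hw' hy hw'y)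

variable [DecidableEq V]

lemma not_reachable_insert_of_forall (hv : v ∉ t) (hu : u ∈ t)
    (h : ∀ w ∈ t, (avoidGraph c t r b).Reachable u w → c s(v, w) ∈ ({r, b} : Set α)) :
    ¬(avoidGraph c (insert v t) r b).Reachable u v := fun huv =>
  hv (huv.mem_of_forall_adj (K := {w | w ∈ t ∧ (avoidGraph c t r b).Reachable u w}) ⟨hu, .rfl⟩
    fun w ⟨hw, huw⟩ w' ⟨hww', _, hw', hc⟩ => by
      have hw'v : w' ≠ v := by rintro rfl; exact hc (by rw [Sym2.eq_swap]; exact h w hw huw)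
      have hw't : w' ∈ t := (mem_insert.1 hw').resolve_left hw'v
      exact ⟨hw't, huw.trans (SimpleGraph.Adj.reachable (G := avoidGraph c t r b)
        ⟨hww', hw, hw't, hc⟩)⟩).1

section Apex

variable (hG : IsGallaiOn c (insert v t)) (hv : v ∉ t)
include hG hv

lemma apex_color_eq_of_not_reachable {z' : V} (hz : z ∈ t) (hz' : z' ∈ t)
    (hzz' : ¬(avoidGraph c t r b).Reachable z z') (hcz : c s(v, z) ∉ ({r, b} : Set α))
    (hcz' : c s(v, z') ∉ ({r, b} : Set α)) : c s(v, z) = c s(v, z') := by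
  have hzz'c := color_mem_of_not_reachable hz hz' hzz'
  rw [Sym2.eq_swap, Sym2.eq_swap (a := v)]
  refine hG.eq_of_ne_of_ne (mem_insert_of_mem hz) (mem_insert_of_mem hz') (mem_insert_self v t)
    (fun h => hzz' (h ▸ .rfl)) (ne_of_mem_of_not_mem hz hv) (ne_of_mem_of_not_mem hz' hv) ?_ ?_
  · rw [Sym2.eq_swap (b := v)]; exact fun h => hcz (h ▸ hzz'c)
  · rw [Sym2.eq_swap (b := v)]; exact fun h => hcz' (h ▸ hzz'c)

lemma apex_color_eq_cross_color (hz : z ∈ t) (hu : u ∈ t)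
    (hzu : ¬(avoidGraph c t r b).Reachable z u) (hcz : c s(v, z) ∈ ({r, b} : Set α))
    (hcu : c s(v, u) ∉ ({r, b} : Set α)) : c s(v, z) = c s(z, u) := by
  have huz := color_mem_of_not_reachable hu hz fun h => hzu h.symm
  rw [Sym2.eq_swap (a := z)]
  exact hG.eq_of_ne_of_ne (mem_insert_self v t) (mem_insert_of_mem hu) (mem_insert_of_mem hz)
    (ne_of_mem_of_not_mem hu hv).symm (ne_of_mem_of_not_mem hz hv).symm
    (fun h => hzu (h ▸ .rfl)) (fun h => hcu (h ▸ hcz)) (fun h => hcu (h ▸ huz))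

lemma apex_color_eq_of_color_mem
    (h : ∀ u ∈ t, ∃ w ∈ t, (avoidGraph c t r b).Reachable u w ∧ c s(v, w) ∉ ({r, b} : Set α))
    (hfar : ∀ z ∈ t, ∃ u ∈ t, c s(v, u) ∉ ({r, b} : Set α) ∧ ¬(avoidGraph c t r b).Reachable z u)
    {z' : V} (hz : z ∈ t) (hz' : z' ∈ t) (hcz : c s(v, z) ∈ ({r, b} : Set α))
    (hcz' : c s(v, z') ∈ ({r, b} : Set α)) : c s(v, z) = c s(v, z') := by
  have hGt : IsGallaiOn c t := hG.mono (subset_insert v t)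
  by_cases hzz' : (avoidGraph c t r b).Reachable z z'
  · obtain ⟨u, hu, hcu, hzu⟩ := hfar z hz
    have hz'u : ¬(avoidGraph c t r b).Reachable z' u := fun h => hzu (hzz'.trans h)
    rw [apex_color_eq_cross_color hG hv hz hu hzu hcz hcu,
      apex_color_eq_cross_color hG hv hz' hu hz'u hcz' hcu]
    exact color_eq_of_reachable hGt hu hzu hzz'
  · obtain ⟨w, hw, hzw, hcw⟩ := h z hz
    obtain ⟨w', hw', hz'w', hcw'⟩ := h z' hz'
    have hw'z : ¬(avoidGraph c t r b).Reachable w' z := fun h => hzz' (h.symm.trans hz'w'.symm)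
    have hwz' : ¬(avoidGraph c t r b).Reachable w z' := fun h => hzz' (hzw.trans h)
    calc c s(v, z) = c s(w', z) := by
          rw [apex_color_eq_cross_color hG hv hz hw' (fun h => hw'z h.symm) hcz hcw',
            Sym2.eq_swap]
      _ = c s(z', z) := color_eq_of_reachable hGt hz hw'z hz'w'.symm
      _ = c s(w, z') := by rw [Sym2.eq_swap, color_eq_of_reachable hGt hz' hwz' hzw.symm]
      _ = c s(v, z') := by
          rw [apex_color_eq_cross_color hG hv hz' hw (fun h => hwz' h.symm) hcz' hcw,
            Sym2.eq_swap]

lemma exists_apex_colors (hx : x ∈ t) (hy : y ∈ t) (hxy : ¬(avoidGraph c t r b).Reachable x y)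
    (h : ∀ u ∈ t, ∃ w ∈ t, (avoidGraph c t r b).Reachable u w ∧ c s(v, w) ∉ ({r, b} : Set α)) :
    ∃ a a' : α, ∀ z ∈ t, c s(v, z) ∈ ({a, a'} : Set α) := by
  obtain ⟨wx, hwx, hxwx, hcx⟩ := h x hx
  obtain ⟨wy, hwy, hywy, hcy⟩ := h y hy
  have hfar : ∀ z ∈ t, ∃ u ∈ t, c s(v, u) ∉ ({r, b} : Set α) ∧ c s(v, u) = c s(v, wx) ∧
      ¬(avoidGraph c t r b).Reachable z u := by
    intro z hz
    by_cases hzx : (avoidGraph c t r b).Reachable z wx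
    · have hwxy : ¬(avoidGraph c t r b).Reachable wx wy := fun h =>
        hxy (hxwx.trans (h.trans hywy.symm))
      exact ⟨wy, hwy, hcy, (apex_color_eq_of_not_reachable hG hv hwx hwy hwxy hcx hcy).symm,
        fun hzy => hwxy (hzx.symm.trans hzy)⟩
    · exact ⟨wx, hwx, hcx, rfl, hzx⟩
  have hout : ∀ z ∈ t, c s(v, z) ∉ ({r, b} : Set α) → c s(v, z) = c s(v, wx) := by
    intro z hz hcz
    obtain ⟨u, hu, hcu, hux, hzu⟩ := hfar z hz
    exact (apex_color_eq_of_not_reachable hG hv hz hu hzu hcz hcu).trans hux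
  have hfar' : ∀ z ∈ t, ∃ u ∈ t, c s(v, u) ∉ ({r, b} : Set α) ∧
      ¬(avoidGraph c t r b).Reachable z u := fun z hz =>
    have ⟨u, hu, hcu, _, hzu⟩ := hfar z hz
    ⟨u, hu, hcu, hzu⟩
  by_cases hex : ∃ z₀ ∈ t, c s(v, z₀) ∈ ({r, b} : Set α)
  · obtain ⟨z₀, hz₀, hc₀⟩ := hex
    refine ⟨c s(v, wx), c s(v, z₀), fun z hz => ?_⟩
    by_cases hcz : c s(v, z) ∈ ({r, b} : Set α)
    · exact Or.inr (apex_color_eq_of_color_mem hG hv h hfar' hz hz₀ hcz hc₀)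
    · exact Or.inl (hout z hz hcz)
  · push Not at hex
    exact ⟨c s(v, wx), c s(v, wx), fun z hz => Or.inl (hout z hz (hex z hz))⟩

end Apex

/-- Gallai's theorem. -/
theorem exists_not_reachable (hG : IsGallaiOn c s) (hs : 1 < #s) :
    ∃ r b : α, ∃ x ∈ s, ∃ y ∈ s, ¬(avoidGraph c s r b).Reachable x y := by
  induction s using Finset.induction_on with
  | empty => simp at hs
  | insert v t hv ih =>
    rw [card_insert_of_notMem hv] at hs
    obtain ⟨a, a', ha⟩ | ⟨r, b, u, hu, hu'⟩ : (∃ a a' : α, ∀ z ∈ t, c s(v, z) ∈ ({a, a'} : Set α)) ∨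
        ∃ r b : α, ∃ u ∈ t, ∀ w ∈ t,
          (avoidGraph c t r b).Reachable u w → c s(v, w) ∈ ({r, b} : Set α) := by
      rcases (by omega : #t = 1 ∨ 1 < #t) with ht | ht
      · obtain ⟨u, rfl⟩ := card_eq_one.1 ht
        exact Or.inl ⟨c s(v, u), c s(v, u), by simp⟩
      obtain ⟨r, b, x, hx, y, hy, hxy⟩ := ih (hG.mono (subset_insert v t)) ht
      by_cases h : ∀ u ∈ t, ∃ w ∈ t,
          (avoidGraph c t r b).Reachable u w ∧ c s(v, w) ∉ ({r, b} : Set α)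
      · exact Or.inl (exists_apex_colors hG hv hx hy hxy h)
      · push Not at h
        exact Or.inr ⟨r, b, h⟩
    · obtain ⟨x, hx⟩ : t.Nonempty := card_pos.1 (by omega)
      exact ⟨a, a', v, mem_insert_self v t, x, mem_insert_of_mem hx,
        not_reachable_of_forall_color_mem
          (fun z hz hzv => ha z ((mem_insert.1 hz).resolve_left hzv))
          (ne_of_mem_of_not_mem hx hv)⟩
    · exact ⟨r, b, u, mem_insert_of_mem hu, v, mem_insert_self v t,
        not_reachable_insert_of_forall hv hu hu'⟩

end GallaiTheorem

section GallaiPartition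

variable {V α : Type*} [DecidableEq V]

/-- A Gallai partition of `s` with cross colours in `{r, b}`, encoded by the map `p` sending each
vertex of `s` to a representative of its part. -/
structure IsGallaiRetraction (c : Sym2 V → α) (s : Finset V) (r b : α) (p : V → V) : Prop where
  mapsTo : ∀ x ∈ s, p x ∈ s
  idem : ∀ x ∈ s, p (p x) = p x
  one_lt_card : 1 < #(s.image p)
  color_eq : ∀ x ∈ s, ∀ y ∈ s, p x ≠ p y → c s(x, y) = c s(p x, p y)
  color_mem : ∀ x ∈ s, ∀ y ∈ s, p x ≠ p y → c s(x, y) ∈ ({r, b} : Set α)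

variable {c : Sym2 V → α} {s : Finset V} {r b : α}

lemma isGallaiRetraction_of_not_reachable (hG : IsGallaiOn c s) {x y : V} (hx : x ∈ s)
    (hy : y ∈ s) (hxy : ¬(avoidGraph c s r b).Reachable x y) :
    IsGallaiRetraction c s r b fun z => Quot.out ((avoidGraph c s r b).connectedComponentMk z) := by
  set G := avoidGraph c s r b
  set p : V → V := fun z => Quot.out (G.connectedComponentMk z)
  have hp : ∀ z, G.Reachable (p z) z := fun z =>
    SimpleGraph.ConnectedComponent.exact (Quot.out_eq (G.connectedComponentMk z))
  have hpeq : ∀ z w, p z = p w ↔ G.Reachable z w := fun z w =>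
    ⟨fun h => (hp z).symm.trans (h ▸ hp w), fun h => by
      simp only [p, SimpleGraph.ConnectedComponent.sound h]⟩
  have hmem : ∀ z ∈ s, p z ∈ s := fun z hz => mem_of_avoidGraph_reachable (hp z).symm hz
  refine ⟨hmem, fun z _ => (hpeq _ _).2 (hp z), ?_, fun z hz w hw hzw => ?_,
    fun z hz w hw hzw => color_mem_of_not_reachable hz hw fun h => hzw ((hpeq z w).2 h)⟩
  · exact one_lt_card.2 ⟨p x, mem_image_of_mem p hx, p y, mem_image_of_mem p hy,
      fun h => hxy ((hpeq x y).1 h)⟩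
  · have hzw' : ¬G.Reachable z w := fun h => hzw ((hpeq z w).2 h)
    rw [color_eq_of_reachable hG hw hzw' (hp z).symm, Sym2.eq_swap,
      color_eq_of_reachable hG (hmem z hz) (fun h => hzw' (h.trans (hp z)).symm) (hp w).symm,
      Sym2.eq_swap]

theorem exists_isGallaiRetraction (hG : IsGallaiOn c s) (hs : 1 < #s) :
    ∃ r b p, IsGallaiRetraction c s r b p := by
  obtain ⟨r, b, x, hx, y, hy, hxy⟩ := exists_not_reachable hG hs
  exact ⟨r, b, _, isGallaiRetraction_of_not_reachable hG hx hy hxy⟩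

namespace IsGallaiRetraction

variable {p : V → V} (hp : IsGallaiRetraction c s r b p)
include hp

lemma image_subset : s.image p ⊆ s := fun _ hi =>
  have ⟨x, hx, hxi⟩ := mem_image.1 hi
  hxi ▸ hp.mapsTo x hx

lemma color_mem_image : ∀ i ∈ s.image p, ∀ j ∈ s.image p, i ≠ j → c s(i, j) ∈ ({r, b} : Set α) := by
  intro i hi j hj hij
  obtain ⟨x, hx, rfl⟩ := mem_image.1 hi
  obtain ⟨y, hy, rfl⟩ := mem_image.1 hj
  exact hp.color_mem _ (hp.mapsTo x hx) _ (hp.mapsTo y hy) (by rwa [hp.idem x hx, hp.idem y hy])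

lemma color_mem_sdiff_nbrColors [DecidableEq α] (hM : IsMonoTriangleFreeOn c s) {S : Finset α}
    (hS : ∀ x ∈ s, ∀ y ∈ s, x ≠ y → c s(x, y) ∈ S) {i x y : V} (hx : x ∈ {z ∈ s | p z = i})
    (hy : y ∈ {z ∈ s | p z = i}) (hxy : x ≠ y) : c s(x, y) ∈ S \ nbrColors c (s.image p) i := by
  rw [mem_filter] at hx hy
  refine mem_sdiff.2 ⟨hS x hx.1 y hy.1 hxy, fun hmem => ?_⟩
  obtain ⟨j, hj, hji⟩ := mem_image.1 hmem
  obtain ⟨hji', hjR⟩ := mem_erase.1 hj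
  obtain ⟨z, hz, rfl⟩ := mem_image.1 hjR
  have hpj : p (p z) = p z := hp.idem z hz
  have hjs : p z ∈ s := hp.mapsTo z hz
  have hcol : ∀ w ∈ s, p w = i → c s(p z, w) = c s(p z, i) := fun w hw hwi => by
    rw [hp.color_eq _ hjs w hw (by rwa [hpj, hwi]), hpj, hwi]
  have hne : ∀ w ∈ s, p w = i → p z ≠ w := fun w _ hwi h => hji' (by rw [← hpj, h, hwi])
  refine hM.ne hjs hx.1 hy.1 (hne x hx.1 hx.2) (hne y hy.1 hy.2) hxy (hcol x hx.1 hx.2)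
    (hcol y hy.1 hy.2) ?_
  rw [← hji, Sym2.eq_swap]

lemma nbrColors_subset [DecidableEq α] {S : Finset α}
    (hS : ∀ x ∈ s, ∀ y ∈ s, x ≠ y → c s(x, y) ∈ S) :
    ∀ i ∈ s.image p, nbrColors c (s.image p) i ⊆ S :=
  fun i hi => image_subset_iff.2 fun j hj =>
    hS i (hp.image_subset hi) j (hp.image_subset (mem_of_mem_erase hj)) (ne_of_mem_erase hj).symm

lemma card_nbrColors_pos [DecidableEq α] : ∀ i ∈ s.image p, 0 < #(nbrColors c (s.image p) i) :=
  fun i hi => by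
    rw [nbrColors, card_pos, image_nonempty, ← card_pos, card_erase_of_mem hi]
    have := hp.one_lt_card
    omega

end IsGallaiRetraction

end GallaiPartition

theorem card_le_gallaiBound {V α : Type*} [DecidableEq V] [DecidableEq α] {c : Sym2 V → α}
    (S : Finset α) (s : Finset V) (hG : IsGallaiOn c s) (hM : IsMonoTriangleFreeOn c s)
    (hS : ∀ x ∈ s, ∀ y ∈ s, x ≠ y → c s(x, y) ∈ S) : #s ≤ gallaiBound #S := by
  induction hk : #S using Nat.strong_induction_on generalizing S s with
  | _ k ih =>
  rcases le_or_gt #s 1 with hs | hs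
  · exact hs.trans (one_le_gallaiBound k)
  obtain ⟨r, b, p, hp⟩ := exists_isGallaiRetraction hG hs
  set R := s.image p
  have hR : 1 < #R := hp.one_lt_card
  have hRM : IsMonoTriangleFreeOn c R := hM.mono hp.image_subset
  have hCS : ∀ i ∈ R, nbrColors c R i ⊆ S := hp.nbrColors_subset hS
  have hC : ∀ i ∈ R, 0 < #(nbrColors c R i) := hp.card_nbrColors_pos
  have hCk : ∀ i ∈ R, #(nbrColors c R i) ≤ k := fun i hi => hk ▸ card_le_card (hCS i hi)
  have hpart : ∀ i ∈ R, #{x ∈ s | p x = i} ≤ gallaiBound (k - #(nbrColors c R i)) := by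
    intro i hi
    have hcard : #(S \ nbrColors c R i) = k - #(nbrColors c R i) := by
      rw [card_sdiff_of_subset (hCS i hi), hk]
    refine hcard ▸ ih _ (by have := hC i hi; have := hCk i hi; omega) _ _
      (hG.mono (filter_subset _ s)) (hM.mono (filter_subset _ s))
      (fun x hx y hy hxy => hp.color_mem_sdiff_nbrColors hM hS hx hy hxy) rfl
  obtain ⟨i₀, hi₀⟩ : R.Nonempty := card_pos.1 (by omega)
  calc #s = ∑ i ∈ R, #{x ∈ s | p x = i} := card_eq_sum_card_image p s
    _ ≤ ∑ i ∈ R, if #(nbrColors c R i) ≤ 1 then gallaiBound (k - 1) else gallaiBound (k - 2) := by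
        refine sum_le_sum fun i hi => (hpart i hi).trans ?_
        have := hC i hi
        split_ifs <;> exact gallaiBound_mono (by omega)
    _ = #{i ∈ R | #(nbrColors c R i) ≤ 1} * gallaiBound (k - 1) +
          (#R - #{i ∈ R | #(nbrColors c R i) ≤ 1}) * gallaiBound (k - 2) := by
        rw [sum_ite, sum_const, sum_const, smul_eq_mul, smul_eq_mul, filter_not,
          card_sdiff_of_subset (filter_subset _ R)]
    _ ≤ gallaiBound k := by
        refine sum_parts_le_gallaiBound (by have := hC i₀ hi₀; have := hCk i₀ hi₀; omega)
          (card_filter_le _ _) (card_le_five_of_two_colors hp.color_mem_image hRM)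
          (card_filter_card_nbrColors_le_one hRM) (fun h₄ => ?_) (fun h₁ => ?_)
        · exact card_eq_zero.2 <| filter_eq_empty_iff.2 fun i hi =>
            (one_lt_card_nbrColors hp.color_mem_image hRM h₄ hi).not_ge
        · exact congrArg card <| filter_true_of_mem fun i hi => h₁ ▸ hCk i hi

section LexColoring

variable {U W β γ : Type*} [DecidableEq U]

def lexColoring (c₁ : Sym2 U → β) (c₂ : Sym2 W → γ) : Sym2 (U × W) → β ⊕ γ :=
  Sym2.lift ⟨fun x y => if x.1 = y.1 then .inr (c₂ s(x.2, y.2)) else .inl (c₁ s(x.1, y.1)),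
    fun x y => by simp only [eq_comm (a := x.1), Sym2.eq_swap]⟩

@[simp]
lemma lexColoring_mk (c₁ : Sym2 U → β) (c₂ : Sym2 W → γ) (x y : U × W) :
    lexColoring c₁ c₂ s(x, y) =
      if x.1 = y.1 then .inr (c₂ s(x.2, y.2)) else .inl (c₁ s(x.1, y.1)) :=
  rfl

variable [Fintype U] [Fintype W] {c₁ : Sym2 U → β} {c₂ : Sym2 W → γ}

lemma IsGallaiOn.lexColoring (h₁ : IsGallaiOn c₁ univ) (h₂ : IsGallaiOn c₂ univ) :
    IsGallaiOn (lexColoring c₁ c₂) univ := by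
  rintro ⟨x₁, x₂⟩ - ⟨y₁, y₂⟩ - ⟨z₁, z₂⟩ - hxy hxz hyz
  by_cases hxy₁ : x₁ = y₁ <;> by_cases hxz₁ : x₁ = z₁ <;> by_cases hyz₁ : y₁ = z₁ <;>
    simp_all [Sym2.eq_swap]
  · exact h₂ x₂ (mem_univ _) y₂ (mem_univ _) z₂ (mem_univ _) hxy hxz hyz
  · exact h₁ x₁ (mem_univ _) y₁ (mem_univ _) z₁ (mem_univ _) hxy₁ hxz₁ hyz₁

lemma IsMonoTriangleFreeOn.lexColoring (h₁ : IsMonoTriangleFreeOn c₁ univ)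
    (h₂ : IsMonoTriangleFreeOn c₂ univ) : IsMonoTriangleFreeOn (lexColoring c₁ c₂) univ := by
  rintro ⟨x₁, x₂⟩ - ⟨y₁, y₂⟩ - ⟨z₁, z₂⟩ - hxy hxz hyz
  by_cases hxy₁ : x₁ = y₁ <;> by_cases hxz₁ : x₁ = z₁ <;> by_cases hyz₁ : y₁ = z₁ <;>
    simp_all [Sym2.eq_swap]
  · exact fun h h' => h₂ x₂ (mem_univ _) y₂ (mem_univ _) z₂ (mem_univ _) hxy hxz hyz ⟨h, h.trans h'⟩
  · exact fun h h' => h₁ x₁ (mem_univ _) y₁ (mem_univ _) z₁ (mem_univ _) hxy₁ hxz₁ hyz₁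
      ⟨h, h.trans h'⟩

end LexColoring

lemma IsGallaiOn.comap {V V' α α' : Type*} [Fintype V] [Fintype V'] {c : Sym2 V → α}
    (h : IsGallaiOn c univ) {e : V' → V} (he : e.Injective) {f : α → α'} (hf : f.Injective) :
    IsGallaiOn (f ∘ c ∘ Sym2.map e) univ := fun x _ y _ z _ hxy hxz hyz => by
  simpa [hf.eq_iff] using h (e x) (mem_univ _) (e y) (mem_univ _) (e z) (mem_univ _)
    (he.ne hxy) (he.ne hxz) (he.ne hyz)

lemma IsMonoTriangleFreeOn.comap {V V' α α' : Type*} [Fintype V] [Fintype V']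
    {c : Sym2 V → α} (h : IsMonoTriangleFreeOn c univ) {e : V' → V} (he : e.Injective)
    {f : α → α'} (hf : f.Injective) : IsMonoTriangleFreeOn (f ∘ c ∘ Sym2.map e) univ :=
  fun x _ y _ z _ hxy hxz hyz => by
    simpa [hf.eq_iff] using h (e x) (mem_univ _) (e y) (mem_univ _) (e z) (mem_univ _)
      (he.ne hxy) (he.ne hxz) (he.ne hyz)

lemma not_grProp_top_iff {k n : ℕ} : ¬grProp k (⊤ : SimpleGraph (Fin 3)) n ↔
    ∃ c : Sym2 (Fin n) → Fin k, IsGallaiOn c univ ∧ IsMonoTriangleFreeOn c univ := by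
  simp only [grProp, hasRainbowTriangle_iff_not_isGallaiOn,
    hasMonoCopy_top_iff_not_isMonoTriangleFreeOn, not_forall, not_or, not_not]

lemma not_grProp_add_mul {a b m n : ℕ} (h₁ : ¬grProp a (⊤ : SimpleGraph (Fin 3)) m)
    (h₂ : ¬grProp b (⊤ : SimpleGraph (Fin 3)) n) :
    ¬grProp (a + b) (⊤ : SimpleGraph (Fin 3)) (m * n) := by
  obtain ⟨c₁, hG₁, hM₁⟩ := not_grProp_top_iff.1 h₁
  obtain ⟨c₂, hG₂, hM₂⟩ := not_grProp_top_iff.1 h₂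
  exact not_grProp_top_iff.2 ⟨finSumFinEquiv ∘ lexColoring c₁ c₂ ∘ Sym2.map finProdFinEquiv.symm,
    (hG₁.lexColoring hG₂).comap finProdFinEquiv.symm.injective finSumFinEquiv.injective,
    (hM₁.lexColoring hM₂).comap finProdFinEquiv.symm.injective finSumFinEquiv.injective⟩

lemma not_grProp_one_two : ¬grProp 1 (⊤ : SimpleGraph (Fin 3)) 2 :=
  not_grProp_top_iff.2 ⟨fun _ => 0, by unfold IsGallaiOn; decide,
    by unfold IsMonoTriangleFreeOn; decide⟩

def pentagonColoring : Sym2 (Fin 5) → Fin 2 :=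
  Sym2.lift ⟨fun i j => if j = i + 1 ∨ i = j + 1 then 0 else 1, by decide⟩

lemma not_grProp_two_five : ¬grProp 2 (⊤ : SimpleGraph (Fin 3)) 5 :=
  not_grProp_top_iff.2 ⟨pentagonColoring, by unfold IsGallaiOn; decide,
    by unfold IsMonoTriangleFreeOn; decide⟩

lemma not_grProp_gallaiBound : ∀ k, 1 ≤ k → ¬grProp k (⊤ : SimpleGraph (Fin 3)) (gallaiBound k)
  | 1, _ => not_grProp_one_two
  | 2, _ => not_grProp_two_five
  | k + 3, _ => by
    have h := not_grProp_add_mul not_grProp_two_five (not_grProp_gallaiBound (k + 1) (by omega))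
    rwa [show 2 + (k + 1) = k + 3 by omega] at h

lemma grProp_of_gallaiBound_lt {k n : ℕ} (h : gallaiBound k < n) :
    grProp k (⊤ : SimpleGraph (Fin 3)) n := by
  by_contra hn
  obtain ⟨c, hG, hM⟩ := not_grProp_top_iff.1 hn
  have := card_le_gallaiBound univ univ hG hM fun _ _ _ _ _ => mem_univ _
  simp only [card_univ, Fintype.card_fin] at this
  omega

lemma gr_eq_succ {W : Type*} {H : SimpleGraph W} {k M : ℕ} (hup : ∀ n, M < n → grProp k H n)
    (hM : ¬grProp k H M) : gr k H = M + 1 :=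
  le_antisymm (Nat.sInf_le hup) <| le_csInf ⟨M + 1, hup⟩ fun _ hN =>
    Nat.succ_le_of_lt <| lt_of_not_ge fun hNM => hM (hN M hNM)

lemma gr_top_eq_gallaiBound_add_one {k : ℕ} (hk : 1 ≤ k) :
    gr k (⊤ : SimpleGraph (Fin 3)) = gallaiBound k + 1 :=
  gr_eq_succ (fun _ => grProp_of_gallaiBound_lt) (not_grProp_gallaiBound k hk)

theorem gallai_ramsey_triangle (k : ℕ) (hk : 2 ≤ k) :
    (Even k → gr k (⊤ : SimpleGraph (Fin 3)) = 5 ^ (k / 2) + 1) ∧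
    (Odd k → gr k (⊤ : SimpleGraph (Fin 3)) = 2 * 5 ^ ((k - 1) / 2) + 1) := by
  rw [gr_top_eq_gallaiBound_add_one (by omega)]
  refine ⟨fun ⟨t, ht⟩ => ?_, fun ⟨t, ht⟩ => ?_⟩
  · rw [ht, ← two_mul, gallaiBound_two_mul, Nat.mul_div_cancel_left t two_pos]
  · rw [ht, gallaiBound_two_mul_add_one, Nat.add_sub_cancel, Nat.mul_div_cancel_left t two_pos]
end

section
/- Let ℓ ≥ 1 and n ≥ 2ℓ + 1 be integers. Suppose the edges of the complete graph K_n are colored so that there is a partition of the vertex set into parts each of size at most ℓ, with every edge between two distinct parts receiving the same fixed color (say blue). Then the coloring contains a blue cycle C_{2ℓ+1}. -/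
open SimpleGraph

/-! Sort the vertices by their parts, so that each part occupies a block of at most `ℓ`
consecutive positions; two vertices of one part are then fewer than `ℓ` positions apart.
Among the first `2ℓ + 1` positions, multiplication by `ℓ + 1 = 2⁻¹` modulo `2ℓ + 1` turns
consecutive vertices of `C_{2ℓ+1}` into positions exactly `ℓ` or `ℓ + 1` apart, hence into
vertices of different parts, joined by a blue edge. -/

open Finset

section MonotoneLabels

variable {V β : Type*} [Finite V] [LinearOrder β]

theorem exists_embedding_fin_monotone_comp (π : V → β) {m : ℕ} (hm : m ≤ Nat.card V) :
    ∃ x : Fin m ↪ V, Monotone (π ∘ x) := by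
  let e := (Finite.equivFin V).symm
  refine ⟨(Fin.castLEEmb hm).trans ((Tuple.sort (π ∘ e)).toEmbedding.trans e.toEmbedding), ?_⟩
  exact (Tuple.monotone_sort (π ∘ e)).comp fun i j h => (Fin.castLE_le_castLE_iff hm).2 h

theorem dist_lt_of_comp_eq {ℓ m : ℕ} {π : V → β} (hfib : ∀ v, {w | π w = π v}.ncard ≤ ℓ)
    (x : Fin m ↪ V) (hx : Monotone (π ∘ x)) {i j : Fin m} (hij : π (x i) = π (x j)) :
    Nat.dist i j < ℓ := by
  wlog hle : i ≤ j generalizing i j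
  · rw [Nat.dist_comm]
    exact this hij.symm (le_of_not_ge hle)
  have hmaps : ∀ k ∈ (Icc i j : Set (Fin m)), x k ∈ {w | π w = π (x i)} := fun k hk =>
    le_antisymm (hij ▸ hx (mem_Icc.1 hk).2) (hx (mem_Icc.1 hk).1)
  have hcard := (Set.ncard_le_ncard_of_injOn x hmaps x.injective.injOn).trans (hfib (x i))
  rw [Set.ncard_coe_finset, Fin.card_Icc] at hcard
  rw [Fin.le_def] at hle
  unfold Nat.dist
  omega

end MonotoneLabels

section CycleOrdering

open Fin.CommRing

variable {ℓ : ℕ}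

theorem isUnit_natCast_succ : IsUnit ((ℓ + 1 : ℕ) : Fin (2 * ℓ + 1)) := by
  have h : (((ℓ + 1) * 2 : ℕ) : Fin (2 * ℓ + 1)) = 1 := by
    rw [show (ℓ + 1) * 2 = (2 * ℓ + 1) + 1 by ring, Nat.cast_add, Fin.natCast_self, zero_add,
      Nat.cast_one]
  exact IsUnit.of_mul_eq_one 2 (by exact_mod_cast h)

theorem le_dist_of_val_sub_eq {a b : Fin (2 * ℓ + 1)} (h : (b - a).val = ℓ + 1) :
    ℓ ≤ Nat.dist a b := by
  unfold Nat.dist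
  rcases le_or_gt a b with hab | hab
  · rw [Fin.coe_sub_iff_le.2 hab] at h
    omega
  · rw [Fin.coe_sub_iff_lt.2 hab] at h
    rw [Fin.lt_def] at hab
    omega

def strideEmbedding (ℓ : ℕ) : Fin (2 * ℓ + 1) ↪ Fin (2 * ℓ + 1) :=
  ⟨fun u => ((ℓ + 1 : ℕ) : Fin (2 * ℓ + 1)) * u, isUnit_natCast_succ.mul_right_injective⟩

theorem le_dist_strideEmbedding_of_adj {u v : Fin (2 * ℓ + 1)}
    (h : (cycleGraph (2 * ℓ + 1)).Adj u v) :
    ℓ ≤ Nat.dist (strideEmbedding ℓ u) (strideEmbedding ℓ v) := by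
  wlog hvu : (v - u).val = 1 generalizing u v
  · rw [Nat.dist_comm]
    exact this h.symm ((cycleGraph_adj'.1 h).resolve_right hvu)
  have hℓ : 1 ≤ ℓ := by
    have := (v - u).isLt
    omega
  apply le_dist_of_val_sub_eq
  rw [strideEmbedding, Function.Embedding.coeFn_mk, ← mul_sub, Fin.val_mul, hvu,
    Fin.val_natCast, mul_one, Nat.mod_mod, Nat.mod_eq_of_lt (by omega)]

theorem exists_cycle_embedding_of_ncard_fiber_le {V β : Type*} [Finite V] [LinearOrder β]
    (π : V → β) (hfib : ∀ v, {w | π w = π v}.ncard ≤ ℓ) (hV : 2 * ℓ + 1 ≤ Nat.card V) :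
    ∃ f : Fin (2 * ℓ + 1) ↪ V, ∀ u v, (cycleGraph (2 * ℓ + 1)).Adj u v → π (f u) ≠ π (f v) := by
  obtain ⟨x, hx⟩ := exists_embedding_fin_monotone_comp π hV
  refine ⟨(strideEmbedding ℓ).trans x, fun u v huv hπ => ?_⟩
  exact (le_dist_strideEmbedding_of_adj huv).not_gt (dist_lt_of_comp_eq hfib x hx hπ)

end CycleOrdering

theorem blue_odd_cycle_of_partition_general {ℓ n : ℕ} (hn : 2 * ℓ + 1 ≤ n)
    {α : Type*} (c : Sym2 (Fin n) → α) (blue : α)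
    (P : Finpartition (Finset.univ : Finset (Fin n)))
    (hsize : ∀ p ∈ P.parts, p.card ≤ ℓ)
    (hblue : ∀ p ∈ P.parts, ∀ q ∈ P.parts, p ≠ q →
      ∀ u ∈ p, ∀ v ∈ q, c s(u, v) = blue) :
    HasMonoCopyIn c (cycleGraph (2 * ℓ + 1)) blue := by
  have hpart (v : Fin n) : P.part v ∈ P.parts := P.part_mem.2 (mem_univ v)
  have hmem (v : Fin n) : v ∈ P.part v := P.mem_part (mem_univ v)
  have hfib (v : Fin n) : {w | toColex (P.part w) = toColex (P.part v)}.ncard ≤ ℓ := by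
    refine (Set.ncard_le_ncard fun w hw => ?_).trans_eq (Set.ncard_coe_finset _)
      |>.trans (hsize _ (hpart v))
    exact toColex.injective hw ▸ hmem w
  obtain ⟨f, hf⟩ := exists_cycle_embedding_of_ncard_fiber_le _ hfib (by rwa [Nat.card_fin])
  exact ⟨f, fun u v huv => hblue _ (hpart _) _ (hpart _) (toColex.injective.ne (hf u v huv)) _
    (hmem _) _ (hmem _)⟩

theorem blue_odd_cycle_of_partition {ℓ n : ℕ} (hℓ : 1 ≤ ℓ) (hn : 2 * ℓ + 1 ≤ n)
    {α : Type*} (c : Sym2 (Fin n) → α) (blue : α)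
    (P : Finpartition (Finset.univ : Finset (Fin n)))
    (hsize : ∀ p ∈ P.parts, p.card ≤ ℓ)
    (hblue : ∀ p ∈ P.parts, ∀ q ∈ P.parts, p ≠ q →
      ∀ u ∈ p, ∀ v ∈ q, c s(u, v) = blue) :
    HasMonoCopyIn c (cycleGraph (2 * ℓ + 1)) blue :=
  blue_odd_cycle_of_partition_general hn c blue P hsize hblue
end

section
/- Erdős–Gallai path theorem: Let G be a graph on n vertices and let k ≥ 2 be an integer. If the number of edges of G satisfies e(G) > ((k − 1)/2)·n, then G contains a path with k edges, i.e., a copy of the path P_{k+1} on k + 1 vertices. -/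
open SimpleGraph

/-!
Induction on the vertex set `s`, where `2 e(G[s])` is kept as the degree sum of `G[s]`. A vertex of
degree below `k / 2` can be deleted without breaking the density condition. Otherwise, if a longest
path `f 0, …, f L` has `L < k` edges, all neighbours of its ends lie on it, and there are more than
`L` of them, so by pigeonhole there are crossing chords `f 0 ~ f (i + 1)` and `f i ~ f L`. They
close the path into a cycle (Pósa), every vertex of which starts a longest path; hence no edge
leaves the vertex set `T` of the path. As `#T ≤ k`, `G[T]` has at most `(k - 1) #T / 2` edges, and
the induction hypothesis applies to `s \ T`.
-/

open Finset

namespace SimpleGraph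

variable {V : Type*} {G : SimpleGraph V}

/-- A path with `L` edges whose vertices `f 0, …, f L` lie in `s`; the values of `f` beyond `L`
are irrelevant. -/
structure IsPathIn (G : SimpleGraph V) (s : Finset V) (L : ℕ) (f : ℕ → V) : Prop where
  adj : ∀ m < L, G.Adj (f m) (f (m + 1))
  injOn : Set.InjOn f (Set.Iic L)
  mem : ∀ m ≤ L, f m ∈ s

namespace IsPathIn

variable {s t : Finset V} {k L : ℕ} {f : ℕ → V}

theorem const {v : V} (hv : v ∈ s) : G.IsPathIn s 0 fun _ ↦ v :=
  ⟨fun _ hm ↦ absurd hm (Nat.not_lt_zero _), fun a ha b hb _ ↦ by simp_all, fun _ _ ↦ hv⟩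

theorem mono (h : G.IsPathIn s L f) (hst : s ⊆ t) : G.IsPathIn t L f :=
  ⟨h.adj, h.injOn, fun m hm ↦ hst (h.mem m hm)⟩

theorem of_le (h : G.IsPathIn s L f) (hk : k ≤ L) : G.IsPathIn s k f :=
  ⟨fun m hm ↦ h.adj m (by omega), h.injOn.mono (Set.Iic_subset_Iic.mpr hk),
    fun m hm ↦ h.mem m (hm.trans hk)⟩

theorem reverse (h : G.IsPathIn s L f) : G.IsPathIn s L fun m ↦ f (L - m) := by
  refine ⟨fun m hm ↦ ?_, fun a ha b hb hab ↦ ?_, fun m _ ↦ h.mem _ (Nat.sub_le L m)⟩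
  · have e : L - (m + 1) + 1 = L - m := by omega
    simpa [e] using (h.adj (L - (m + 1)) (by omega)).symm
  · have := h.injOn (Set.mem_Iic.mpr (Nat.sub_le L a)) (Set.mem_Iic.mpr (Nat.sub_le L b)) hab
    simp only [Set.mem_Iic] at ha hb
    omega

theorem cons (h : G.IsPathIn s L f) {w : V} (hw : w ∈ s) (hadj : G.Adj w (f 0))
    (hnew : ∀ m ≤ L, f m ≠ w) :
    G.IsPathIn s (L + 1) fun m ↦ if m = 0 then w else f (m - 1) := by
  refine ⟨fun m hm ↦ ?_, fun a ha b hb hab ↦ ?_, fun m hm ↦ ?_⟩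
  · rcases m with _ | m
    · simpa using hadj
    · simpa using h.adj m (by omega)
  · simp only [Set.mem_Iic] at ha hb
    rcases a with _ | a <;> rcases b with _ | b
    · rfl
    · exact absurd hab.symm (by simpa using hnew b (by omega))
    · exact absurd hab (by simpa using hnew a (by omega))
    · simpa using h.injOn (Set.mem_Iic.mpr (by omega : a ≤ L)) (Set.mem_Iic.mpr (by omega))
        (by simpa using hab)
  · rcases m with _ | m
    · simpa using hw
    · simpa using h.mem m (by omega)

theorem exists_pathGraph_embedding (h : G.IsPathIn s L f) :
    ∃ e : Fin (L + 1) ↪ V, ∀ u v, (pathGraph (L + 1)).Adj u v → G.Adj (e u) (e v) := by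
  refine ⟨⟨fun m ↦ f m, fun a b hab ↦ Fin.ext (h.injOn (by simp [Fin.is_le a])
    (by simp [Fin.is_le b]) hab)⟩, fun u v huv ↦ ?_⟩
  change G.Adj (f u) (f v)
  rcases pathGraph_adj.mp huv with huv | huv
  · simpa [← huv] using h.adj u (by omega)
  · simpa [← huv] using (h.adj v (by omega)).symm

variable [DecidableEq V]

theorem image_subset (h : G.IsPathIn s L f) : (range (L + 1)).image f ⊆ s := by
  intro v hv
  obtain ⟨m, hm, rfl⟩ := mem_image.mp hv
  exact h.mem m (by simpa [Nat.lt_succ_iff] using hm)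

theorem card_image (h : G.IsPathIn s L f) : #((range (L + 1)).image f) = L + 1 := by
  rw [card_image_of_injOn, card_range]
  intro a ha b hb
  simp only [coe_range, Set.mem_Iio] at ha hb
  exact h.injOn (Set.mem_Iic.mpr (by omega)) (Set.mem_Iic.mpr (by omega))

theorem lt_card (h : G.IsPathIn s L f) : L < #s := by
  simpa [h.card_image] using card_le_card h.image_subset

end IsPathIn

section DegSum

variable [DecidableRel G.Adj]

/-- The degree sum of the subgraph induced on `s`, i.e. twice its number of edges. -/
def degSumIn (G : SimpleGraph V) [DecidableRel G.Adj] (s : Finset V) : ℕ :=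
  ∑ v ∈ s, #{w ∈ s | G.Adj v w}

variable {s T : Finset V} {v : V}

theorem degSumIn_univ [Fintype V] : G.degSumIn univ = 2 * #G.edgeFinset := by
  simp [degSumIn, ← sum_degrees_eq_twice_card_edges, ← card_neighborFinset_eq_degree,
    neighborFinset_eq_filter]

variable [DecidableEq V]

theorem degSumIn_le : G.degSumIn s ≤ #s * (#s - 1) := by
  refine sum_le_card_nsmul s _ _ fun v hv ↦ ?_
  rw [← card_erase_of_mem hv]
  exact card_le_card fun w hw ↦ by
    obtain ⟨hws, hadj⟩ := mem_filter.mp hw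
    exact mem_erase.mpr ⟨hadj.ne', hws⟩

theorem degSumIn_insert (hv : v ∉ s) :
    G.degSumIn (insert v s) = G.degSumIn s + 2 * #{w ∈ s | G.Adj v w} := by
  have hcard : ∀ u, #{w ∈ insert v s | G.Adj u w} =
      #{w ∈ s | G.Adj u w} + if G.Adj u v then 1 else 0 := fun u ↦ by
    rw [filter_insert]
    split_ifs with huv
    · exact card_insert_of_notMem fun h ↦ hv (mem_filter.mp h).1
    · rfl
  simp only [degSumIn, sum_insert hv, hcard, sum_add_distrib, ← card_filter, G.irrefl,
    if_false, add_zero, adj_comm _ _ v]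
  ring

theorem degSumIn_eq_add_sdiff (hT : T ⊆ s)
    (hcl : ∀ u ∈ T, ∀ w ∈ s, G.Adj u w → w ∈ T) :
    G.degSumIn s = G.degSumIn T + G.degSumIn (s \ T) := by
  rw [degSumIn, ← sum_sdiff hT, add_comm, degSumIn, degSumIn]
  congr 1 <;> refine sum_congr rfl fun u hu ↦ congrArg card (ext fun w ↦ ?_)
  · simp only [mem_filter]
    exact ⟨fun ⟨hws, hadj⟩ ↦ ⟨hcl u hu w hws hadj, hadj⟩, fun ⟨hwT, hadj⟩ ↦ ⟨hT hwT, hadj⟩⟩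
  · obtain ⟨hus, huT⟩ := mem_sdiff.mp hu
    simp only [mem_filter, mem_sdiff]
    exact ⟨fun ⟨hws, hadj⟩ ↦ ⟨⟨hws, fun hwT ↦ huT (hcl w hwT u hus hadj.symm)⟩, hadj⟩,
      fun ⟨⟨hws, _⟩, hadj⟩ ↦ ⟨hws, hadj⟩⟩

end DegSum

variable [DecidableEq V]

open Fin.NatCast in
theorem isPathIn_of_cycle {n : ℕ} {c : Fin (n + 1) → V} (hc : Function.Injective c)
    (hadj : ∀ x, G.Adj (c x) (c (x + 1))) (x : Fin (n + 1)) :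
    G.IsPathIn (univ.image c) n fun m : ℕ ↦ c (x + m) := by
  refine ⟨fun m _ ↦ ?_, fun a ha b hb hab ↦ ?_, fun m _ ↦ mem_image_of_mem c (mem_univ _)⟩
  · simpa [Nat.cast_succ, add_assoc] using hadj (x + m)
  · simp only [Set.mem_Iic] at ha hb
    have := congrArg Fin.val (add_left_cancel (hc hab))
    rwa [Fin.val_natCast, Fin.val_natCast, Nat.mod_eq_of_lt (by omega),
      Nat.mod_eq_of_lt (by omega)] at this

namespace IsPathIn

variable {s : Finset V} {L i : ℕ} {f : ℕ → V}

/-- The chords `f 0 ~ f (i + 1)` and `f i ~ f L` close the path into the cycle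
`f 0, …, f i, f L, f (L - 1), …, f (i + 1)`. -/
theorem exists_cycle (h : G.IsPathIn s L f) (hi : i < L) (h₀ : G.Adj (f 0) (f (i + 1)))
    (hL : G.Adj (f i) (f L)) :
    ∃ c : Fin (L + 1) → V, Function.Injective c ∧ (∀ x, G.Adj (c x) (c (x + 1))) ∧
      univ.image c = (range (L + 1)).image f := by
  set σ : ℕ → ℕ := fun m ↦ if m ≤ i then m else L + i + 1 - m with hσ
  have hσL : ∀ m ≤ L, σ m ≤ L := fun m _ ↦ by simp only [hσ]; split_ifs <;> omega
  have hσσ : ∀ m ≤ L, σ (σ m) = m := fun m _ ↦ by simp only [hσ]; split_ifs <;> omega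
  refine ⟨fun x ↦ f (σ x), fun x y hxy ↦ ?_, fun x ↦ ?_, ?_⟩
  · have := h.injOn (Set.mem_Iic.mpr (hσL x (by omega))) (Set.mem_Iic.mpr (hσL y (by omega)))
      hxy
    exact Fin.ext (by rw [← hσσ x (by omega), ← hσσ y (by omega), this])
  · show G.Adj (f (σ x)) (f (σ ↑(x + 1)))
    rw [Fin.val_add_one]
    split_ifs with hx
    · have hxL : (x : ℕ) = L := by simp [hx]
      simpa [hσ, hxL, show ¬L ≤ i by omega, show L + i + 1 - L = i + 1 by omega] using h₀.symm
    · have hxL : (x : ℕ) < L := by have := Fin.val_lt_last hx; simpa using this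
      simp only [hσ]
      split_ifs with h₁ h₂ h₂
      · exact h.adj x (by omega)
      · simpa [show (x : ℕ) = i by omega] using hL
      · omega
      · simpa [show L + i + 1 - x = L + i - x + 1 by omega]
          using (h.adj (L + i - x) (by omega)).symm
  · ext v
    simp only [mem_image, mem_univ, true_and, mem_range, Nat.lt_succ_iff]
    constructor
    · rintro ⟨x, rfl⟩
      exact ⟨σ x, hσL x (by omega), rfl⟩
    · rintro ⟨m, hm, rfl⟩
      exact ⟨⟨σ m, by have := hσL m hm; omega⟩, by simp [hσσ m hm]⟩

end IsPathIn

theorem exists_crossing_chords [DecidableRel G.Adj] {s : Finset V} {L : ℕ} {f : ℕ → V}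
    (h₀ : ∀ w ∈ s, G.Adj (f 0) w → w ∈ (range (L + 1)).image f)
    (hL : ∀ w ∈ s, G.Adj (f L) w → w ∈ (range (L + 1)).image f)
    (hdeg : L < #{w ∈ s | G.Adj (f 0) w} + #{w ∈ s | G.Adj (f L) w}) :
    ∃ i < L, G.Adj (f 0) (f (i + 1)) ∧ G.Adj (f i) (f L) := by
  set A := {i ∈ range L | G.Adj (f 0) (f (i + 1))}
  set B := {i ∈ range L | G.Adj (f i) (f L)}
  have hA : #{w ∈ s | G.Adj (f 0) w} ≤ #A := by
    refine (card_le_card fun w hw ↦ ?_).trans (card_image_le (f := fun i ↦ f (i + 1)))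
    obtain ⟨hws, hadj⟩ := mem_filter.mp hw
    obtain ⟨m, hm, rfl⟩ := mem_image.mp (h₀ w hws hadj)
    obtain ⟨i, rfl⟩ : ∃ i, m = i + 1 := Nat.exists_eq_succ_of_ne_zero fun hm0 ↦
      G.irrefl (by rwa [hm0] at hadj)
    exact mem_image.mpr ⟨i, mem_filter.mpr ⟨by simp at hm ⊢; omega, hadj⟩, rfl⟩
  have hB : #{w ∈ s | G.Adj (f L) w} ≤ #B := by
    refine (card_le_card fun w hw ↦ ?_).trans (card_image_le (f := f))
    obtain ⟨hws, hadj⟩ := mem_filter.mp hw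
    obtain ⟨m, hm, rfl⟩ := mem_image.mp (hL w hws hadj)
    have hmL : m ≠ L := fun hmL ↦ G.irrefl (by rwa [hmL] at hadj)
    exact mem_image.mpr ⟨m, mem_filter.mpr ⟨by simp at hm ⊢; omega, hadj.symm⟩, rfl⟩
  obtain ⟨i, hi⟩ := inter_nonempty_of_card_lt_card_add_card (t := A) (u := B)
    (filter_subset _ (range L)) (filter_subset _ (range L)) (by rw [card_range]; omega)
  obtain ⟨hiA, hiB⟩ := mem_inter.mp hi
  exact ⟨i, mem_range.mp (mem_filter.mp hiA).1, (mem_filter.mp hiA).2, (mem_filter.mp hiB).2⟩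

namespace IsPathIn

variable {s : Finset V} {k L : ℕ} {f : ℕ → V}

theorem mem_image_of_adj_zero (h : G.IsPathIn s L f)
    (hmax : ∀ g, ¬G.IsPathIn s (L + 1) g) {w : V} (hw : w ∈ s) (hadj : G.Adj (f 0) w) :
    w ∈ (range (L + 1)).image f := by
  by_contra hnew
  refine hmax _ (h.cons hw hadj.symm fun m hm hfm ↦ hnew ?_)
  exact mem_image.mpr ⟨m, mem_range.mpr (by omega), hfm⟩

variable [DecidableRel G.Adj]

theorem mem_image_of_adj (h : G.IsPathIn s L f)
    (hmax : ∀ g, ¬G.IsPathIn s (L + 1) g) (hLk : L < k)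
    (hdeg : ∀ v ∈ s, k ≤ 2 * #{w ∈ s | G.Adj v w}) {v w : V}
    (hv : v ∈ (range (L + 1)).image f) (hw : w ∈ s) (hadj : G.Adj v w) :
    w ∈ (range (L + 1)).image f := by
  have hL : ∀ w ∈ s, G.Adj (f L) w → w ∈ (range (L + 1)).image f := fun w hw hadj ↦ by
    obtain ⟨m, hm, rfl⟩ := mem_image.mp (h.reverse.mem_image_of_adj_zero hmax hw (by simpa))
    exact mem_image.mpr ⟨L - m, by simp, rfl⟩
  obtain ⟨i, hi, h₀i, hiL⟩ := exists_crossing_chords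
    (fun _ ↦ h.mem_image_of_adj_zero hmax) hL
    (by have := hdeg _ (h.mem 0 L.zero_le); have := hdeg _ (h.mem L le_rfl); omega)
  obtain ⟨c, hc, hcadj, hcf⟩ := h.exists_cycle hi h₀i hiL
  rw [← hcf] at hv ⊢
  obtain ⟨x, -, rfl⟩ := mem_image.mp hv
  have hg := isPathIn_of_cycle hc hcadj x
  have := (hg.mono (hcf ▸ h.image_subset)).mem_image_of_adj_zero hmax hw (by simpa using hadj)
  obtain ⟨m, -, rfl⟩ := mem_image.mp this
  exact mem_image_of_mem c (mem_univ _)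

end IsPathIn

variable {s : Finset V} {k : ℕ}

theorem exists_isPathIn_maximal (hs : s.Nonempty) :
    ∃ L f, G.IsPathIn s L f ∧ ∀ g, ¬G.IsPathIn s (L + 1) g := by
  classical
  have hex : ∃ n, ∀ g, ¬G.IsPathIn s n g := ⟨#s, fun g hg ↦ hg.lt_card.false⟩
  obtain ⟨v, hv⟩ := hs
  obtain ⟨L, hL⟩ : ∃ L, Nat.find hex = L + 1 :=
    Nat.exists_eq_succ_of_ne_zero fun h0 ↦ (h0 ▸ Nat.find_spec hex) _ (IsPathIn.const hv)
  obtain ⟨f, hf⟩ : ∃ f, G.IsPathIn s L f := by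
    simpa using Nat.find_min hex (hL ▸ L.lt_succ_self)
  exact ⟨L, f, hf, hL ▸ Nat.find_spec hex⟩

variable [DecidableRel G.Adj]

theorem exists_closed_of_forall_not_isPathIn (hs : s.Nonempty)
    (hdeg : ∀ v ∈ s, k ≤ 2 * #{w ∈ s | G.Adj v w}) (hno : ∀ f, ¬G.IsPathIn s k f) :
    ∃ T ⊆ s, T.Nonempty ∧ #T ≤ k ∧ ∀ u ∈ T, ∀ w ∈ s, G.Adj u w → w ∈ T := by
  obtain ⟨L, f, hf, hmax⟩ := exists_isPathIn_maximal hs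
  have hLk : L < k := lt_of_not_ge fun hkL ↦ hno f (hf.of_le hkL)
  refine ⟨_, hf.image_subset, ⟨f 0, mem_image_of_mem f (by simp)⟩, hf.card_image.trans_le hLk,
    fun u hu w hw hadj ↦ hf.mem_image_of_adj hmax hLk hdeg hu hw hadj⟩

theorem exists_isPathIn_of_mul_lt_degSumIn (k : ℕ) (s : Finset V)
    (h : (k - 1) * #s < G.degSumIn s) : ∃ f, G.IsPathIn s k f := by
  induction s using Finset.strongInduction with
  | H s ih =>
  by_cases hlow : ∃ v ∈ s, 2 * #{w ∈ s | G.Adj v w} < k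
  · obtain ⟨v, hv, hvk⟩ := hlow
    have hdel := degSumIn_insert (G := G) (notMem_erase v s)
    rw [insert_erase hv] at hdel
    have hdeg : #{w ∈ s.erase v | G.Adj v w} ≤ #{w ∈ s | G.Adj v w} :=
      card_le_card (filter_subset_filter _ (erase_subset v s))
    rw [← card_erase_add_one hv, mul_add_one] at h
    obtain ⟨f, hf⟩ := ih _ (erase_ssubset hv) (by omega)
    exact ⟨f, hf.mono (erase_subset v s)⟩
  · push Not at hlow
    by_contra! hno
    have hs : s.Nonempty := nonempty_iff_ne_empty.mpr fun hs ↦ by simp [hs, degSumIn] at h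
    obtain ⟨T, hTs, hT, hTk, hcl⟩ := exists_closed_of_forall_not_isPathIn hs hlow hno
    have hTsum : G.degSumIn T ≤ #T * (k - 1) :=
      degSumIn_le.trans (Nat.mul_le_mul_left _ (by omega))
    rw [degSumIn_eq_add_sdiff hTs hcl, ← card_sdiff_add_card_eq_card hTs, mul_add] at h
    obtain ⟨f, hf⟩ := ih _ (sdiff_ssubset hTs hT) (by linarith [mul_comm (k - 1) #T])
    exact hno f (hf.mono sdiff_subset)

end SimpleGraph

theorem erdos_gallai_path_general {V : Type*} [Fintype V]
    (G : SimpleGraph V) [DecidableRel G.Adj] (n k : ℕ)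
    (hn : Fintype.card V = n) (hk : 2 ≤ k)
    (he : ((k : ℚ) - 1) / 2 * n < G.edgeFinset.card) :
    ∃ f : Fin (k + 1) ↪ V, ∀ u v, (pathGraph (k + 1)).Adj u v → G.Adj (f u) (f v) := by
  classical
  have hdeg : (k - 1) * #(univ : Finset V) < G.degSumIn univ := by
    rw [degSumIn_univ, card_univ, hn]
    qify [show 1 ≤ k by omega]
    linarith
  obtain ⟨f, hf⟩ := exists_isPathIn_of_mul_lt_degSumIn k univ hdeg
  exact hf.exists_pathGraph_embedding

theorem erdos_gallai_path {V : Type*} [Fintype V] [DecidableEq V]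
    (G : SimpleGraph V) [DecidableRel G.Adj] (n k : ℕ)
    (hn : Fintype.card V = n) (hk : 2 ≤ k)
    (he : ((k : ℚ) - 1) / 2 * n < G.edgeFinset.card) :
    ∃ f : Fin (k + 1) ↪ V, ∀ u v, (pathGraph (k + 1)).Adj u v → G.Adj (f u) (f v) :=
  erdos_gallai_path_general G n k hn hk he
end

section
/- For all integers n ≥ 2 and k ≥ 1, there exists a k-coloring of the edges of the complete graph K_{(n−1)k + n} that contains no rainbow triangle and no monochromatic copy of the even cycle C_{2n}; consequently gr_k(K_3 : C_{2n}) ≥ (n − 1)k + n + 1. -/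
/-!
The coloring assigns each vertex a layer, vertices `0, …, 2n-2` forming layer `0` and each
further block of `n - 1` consecutive vertices the next layer, and gives an edge the larger
layer of its ends. Among three vertices the two edges at the one of largest layer share a
color, so there is no rainbow triangle. In a monochromatic cycle of color `i` every vertex has
layer at most `i` and the vertices of layer exactly `i` cover all edges of the cycle, so there
are at least `n` of them; this rules out `i = 0` (only `2n - 1` vertices) and every `i > 0`
(only `n - 1` vertices). Since `gr` is an infimum, the lower bound also needs the set it is
taken over to be nonempty, which the multicolor Ramsey theorem provides.
-/

open SimpleGraph

open Finset Fintype

def ramseyBound (k : ℕ) : ℕ → ℕ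
  | 0 => 0
  | t + 1 => k * ramseyBound k t + 1

section Ramsey

variable {V α : Type*} [Fintype α] [Nonempty α]

theorem exists_embedding_color_eq_of_lt (c : Sym2 V → α) (t : ℕ) (A : Finset V)
    (hA : ramseyBound (card α) t ≤ #A) :
    ∃ (v : Fin t ↪ V) (col : Fin t → α),
      (∀ i, v i ∈ A) ∧ ∀ i j, i < j → c s(v i, v j) = col i := by
  classical
  induction t generalizing A with
  | zero =>
    exact ⟨⟨Fin.elim0, fun i => i.elim0⟩, Fin.elim0, fun i => i.elim0, fun i => i.elim0⟩
  | succ t ih =>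
    obtain ⟨a, ha⟩ : A.Nonempty := card_pos.1 (by simp only [ramseyBound] at hA; omega)
    obtain ⟨i₀, -, hfiber⟩ := exists_le_card_fiber_of_mul_le_card_of_maps_to
      (f := fun b => c s(a, b)) (n := ramseyBound (card α) t) (fun _ _ => mem_univ _)
      univ_nonempty
      (by rw [card_univ, card_erase_of_mem ha]; simp only [ramseyBound] at hA; omega)
    obtain ⟨v, col, hvA, hcol⟩ := ih _ hfiber
    have hv : ∀ i, v i ∈ A.erase a ∧ c s(a, v i) = i₀ := fun i => mem_filter.1 (hvA i)
    refine ⟨⟨Fin.cons a v, Fin.cons_injective_iff.2 ⟨?_, v.injective⟩⟩, Fin.cons i₀ col,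
      ?_, ?_⟩
    · rintro ⟨i, hi⟩
      exact ne_of_mem_erase (hv i).1 hi
    · exact Fin.cases ha fun i => mem_of_mem_erase (hv i).1
    · intro i j hij
      induction j using Fin.cases with
      | zero => exact absurd hij (Fin.not_lt_zero i)
      | succ j =>
        induction i using Fin.cases with
        | zero => exact (hv j).2
        | succ i => exact hcol i j (Fin.succ_lt_succ_iff.1 hij)

theorem exists_embedding_forall_ne_color_eq [Fintype V] (c : Sym2 V → α) (w : ℕ)
    (hV : ramseyBound (card α) (card α * w) ≤ card V) :
    ∃ (f : Fin w ↪ V) (i : α), ∀ a b, a ≠ b → c s(f a, f b) = i := by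
  classical
  obtain ⟨v, col, -, hcol⟩ := exists_embedding_color_eq_of_lt c _ univ hV
  obtain ⟨i, hi⟩ := exists_le_card_fiber_of_mul_le_card col (n := w) (by simp)
  let e := orderEmbOfCardLe _ hi
  have he : ∀ a, col (e a) = i := fun a => (mem_filter.1 (orderEmbOfCardLe_mem _ hi a)).2
  refine ⟨e.toEmbedding.trans v, i, fun a b hab => ?_⟩
  rcases hab.lt_or_gt with h | h
  · exact (hcol _ _ (e.strictMono h)).trans (he a)
  · rw [Sym2.eq_swap]
    exact (hcol _ _ (e.strictMono h)).trans (he b)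

theorem hasMonoCopy_of_ramseyBound_le {W : Type*} [Fintype V] [Fintype W] (c : Sym2 V → α)
    (H : SimpleGraph W) (hV : ramseyBound (card α) (card α * card W) ≤ card V) :
    HasMonoCopy c H := by
  classical
  obtain ⟨f, i, hf⟩ := exists_embedding_forall_ne_color_eq c _ hV
  exact ⟨i, (equivFin W).toEmbedding.trans f, fun u v huv =>
    hf _ _ ((equivFin W).injective.ne huv.ne)⟩

end Ramsey

theorem exists_forall_le_grProp {W : Type*} [Fintype W] {k : ℕ} (hk : 1 ≤ k)
    (H : SimpleGraph W) : ∃ N, ∀ m, N ≤ m → grProp k H m := by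
  have : Nonempty (Fin k) := ⟨⟨0, hk⟩⟩
  exact ⟨_, fun m hm c => Or.inr (hasMonoCopy_of_ramseyBound_le c H (by simpa using hm))⟩

theorem lt_gr_of_not_grProp {W : Type*} {k N : ℕ} {H : SimpleGraph W}
    (hH : ∃ N₀, ∀ m, N₀ ≤ m → grProp k H m) (hN : ¬ grProp k H N) : N < gr k H :=
  lt_of_not_ge fun hle => hN (Nat.sInf_mem hH N hle)

def maxColoring {V α : Type*} [LinearOrder α] (ℓ : V → α) (e : Sym2 V) : α :=
  (e.map ℓ).sup

section MaxColoring

variable {V α : Type*} [LinearOrder α] (ℓ : V → α)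

@[simp]
theorem maxColoring_mk (u v : V) : maxColoring ℓ s(u, v) = max (ℓ u) (ℓ v) := rfl

theorem not_hasRainbowTriangle_maxColoring : ¬ HasRainbowTriangle (maxColoring ℓ) := by
  rintro ⟨x, y, z, -, -, -, hxy, hxz, hyz⟩
  simp only [maxColoring_mk] at hxy hxz hyz
  grind

end MaxColoring

theorem SimpleGraph.cycleGraph_adj_add_one {m : ℕ} (v : Fin (m + 2)) :
    (cycleGraph (m + 2)).Adj v (v + 1) :=
  cycleGraph_adj.2 (Or.inr (add_sub_cancel_left v 1))

theorem card_le_two_mul_card_of_forall_mem_or_add_mem {G : Type*} [AddGroup G] [Fintype G]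
    [DecidableEq G] {S : Finset G} (a : G) (hS : ∀ g, g ∈ S ∨ g + a ∈ S) :
    card G ≤ 2 * #S := by
  have hcover : univ ⊆ S ∪ S.image (· - a) := fun g _ => by
    rcases hS g with h | h
    · exact mem_union_left _ h
    · exact mem_union_right _ (mem_image.2 ⟨g + a, h, add_sub_cancel_right g a⟩)
  calc card G = #(univ : Finset G) := card_univ.symm
    _ ≤ #(S ∪ S.image (· - a)) := card_le_card hcover
    _ ≤ #S + #(S.image (· - a)) := card_union_le _ _
    _ ≤ 2 * #S := by have := card_image_le (s := S) (f := (· - a)); omega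

section MaxColoringCycle

variable {V α : Type*} [LinearOrder α] [Fintype V] {ℓ : V → α} {m : ℕ}

theorem le_card_of_hasMonoCopyIn_maxColoring_cycleGraph {i : α} (hm : 2 ≤ m)
    (h : HasMonoCopyIn (maxColoring ℓ) (cycleGraph m) i) :
    m ≤ #{v | ℓ v ≤ i} ∧ m ≤ 2 * #{v | ℓ v = i} := by
  classical
  obtain ⟨m, rfl⟩ := Nat.exists_eq_add_of_le' hm
  obtain ⟨f, hf⟩ := h
  have hmax (u : Fin (m + 2)) : max (ℓ (f u)) (ℓ (f (u + 1))) = i :=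
    hf _ _ (cycleGraph_adj_add_one u)
  have hle (u : Fin (m + 2)) : ℓ (f u) ≤ i := (le_max_left _ _).trans_eq (hmax u)
  have hcover (u : Fin (m + 2)) : ℓ (f u) = i ∨ ℓ (f (u + 1)) = i :=
    (max_choice _ _).imp (fun h => h.symm.trans (hmax u)) (fun h => h.symm.trans (hmax u))
  constructor
  · calc m + 2 = #(univ.map f) := by simp
      _ ≤ #{v | ℓ v ≤ i} := card_le_card fun v hv => by
        obtain ⟨u, -, rfl⟩ := mem_map.1 hv
        simpa using hle u
  · calc m + 2 ≤ 2 * #{u | ℓ (f u) = i} := by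
          simpa using card_le_two_mul_card_of_forall_mem_or_add_mem
            (S := {u | ℓ (f u) = i}) 1 (by simpa using hcover)
      _ ≤ 2 * #{v | ℓ v = i} := by
          gcongr
          exact card_le_card_of_injOn f (fun u hu => by simpa using hu) f.injective.injOn

theorem not_hasMonoCopy_maxColoring_cycleGraph (hm : 2 ≤ m)
    (hℓ : ∀ i, #{v | ℓ v ≤ i} < m ∨ 2 * #{v | ℓ v = i} < m) :
    ¬ HasMonoCopy (maxColoring ℓ) (cycleGraph m) := by
  rintro ⟨i, hi⟩
  have := le_card_of_hasMonoCopyIn_maxColoring_cycleGraph hm hi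
  rcases hℓ i with h | h <;> omega

end MaxColoringCycle

-- Truncated subtraction puts all of `0, …, 2n-2` in layer `0`.
def evenCycleLayer {n k : ℕ} (hn : 2 ≤ n) (hk : 1 ≤ k) (v : Fin ((n - 1) * k + n)) : Fin k :=
  ⟨(v - n) / (n - 1), Nat.div_lt_of_lt_mul <| by
    have := v.isLt
    have : 1 ≤ (n - 1) * k := Nat.one_le_iff_ne_zero.2 (Nat.mul_ne_zero (by omega) (by omega))
    omega⟩

theorem card_evenCycleLayer_lt {n k : ℕ} (hn : 2 ≤ n) (hk : 1 ≤ k) (i : Fin k) :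
    #{v | evenCycleLayer hn hk v ≤ i} < 2 * n ∨
      2 * #{v | evenCycleLayer hn hk v = i} < 2 * n := by
  have hbounds {v} {j : ℕ} (h : (evenCycleLayer hn hk v : ℕ) = j) :
      j * (n - 1) ≤ v - n ∧ v - n < j * (n - 1) + (n - 1) := by
    have := (Nat.div_eq_iff (by omega)).1 h
    omega
  rcases Nat.eq_zero_or_pos i.val with hi | hi
  · left
    calc #{v | evenCycleLayer hn hk v ≤ i} ≤ #(range (2 * n - 1)) := by
          refine card_le_card_of_injOn Fin.val (fun v hv => ?_) Fin.val_injective.injOn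
          have hv : (evenCycleLayer hn hk v : ℕ) = 0 := by simpa [Fin.le_def, hi] using hv
          have := hbounds hv
          simp only [coe_range, Set.mem_Iio]
          omega
      _ < 2 * n := by simp only [Finset.card_range]; omega
  · right
    calc 2 * #{v | evenCycleLayer hn hk v = i} ≤ 2 * #(range (n - 1)) := by
          gcongr
          refine card_le_card_of_injOn (fun v => v - n - i * (n - 1)) (fun v hv => ?_) ?_
          · have := hbounds (congrArg Fin.val (mem_filter.1 hv).2)
            simp only [coe_range, Set.mem_Iio]
            omega
          · intro v hv w hw hvw
            have := hbounds (congrArg Fin.val (mem_filter.1 hv).2)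
            have := hbounds (congrArg Fin.val (mem_filter.1 hw).2)
            simp only at hvw
            have : n - 1 ≤ i * (n - 1) := Nat.le_mul_of_pos_left _ hi
            exact Fin.ext (by omega)
      _ < 2 * n := by simp only [Finset.card_range]; omega

theorem gallai_ramsey_even_cycles_lower (n k : ℕ) (hn : 2 ≤ n) (hk : 1 ≤ k) :
    (∃ c : Sym2 (Fin ((n - 1) * k + n)) → Fin k,
      ¬ HasRainbowTriangle c ∧ ¬ HasMonoCopy c (cycleGraph (2 * n))) ∧
    (n - 1) * k + n + 1 ≤ gr k (cycleGraph (2 * n)) := by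
  have hc : ¬ HasRainbowTriangle (maxColoring (evenCycleLayer hn hk)) ∧
      ¬ HasMonoCopy (maxColoring (evenCycleLayer hn hk)) (cycleGraph (2 * n)) :=
    ⟨not_hasRainbowTriangle_maxColoring _,
      not_hasMonoCopy_maxColoring_cycleGraph (by omega) (card_evenCycleLayer_lt hn hk)⟩
  exact ⟨⟨_, hc⟩, lt_gr_of_not_grProp (exists_forall_le_grProp hk _)
    fun h => (h _).elim hc.1 hc.2⟩
end
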